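/- arXiv:2506.11889 — 5 statements merged into one kernel-verified Lean document; each statement's English description precedes it below -/
import Mathlib

section
/- Let M ≥ 3 be an integer, let 0 < ε ≤ 1 and let t ≥ ε. Then there exists a finite collection 𝒱 of unit vectors in ℝ^M such that (a) |𝒱| ≤ (1 + ε^{-1})^{(M−1)/2} · 4^{M−1}, and (b) A(𝒱, t/(1+ε)) ⊆ B_t ⊆ A(𝒱, t), where B_t denotes the closed Euclidean ball of radius t centered at the origin in ℝ^M. -/
open MeasureTheory Real

noncomputable section

/-- The Euclidean dot product on `ℝ^M`. -/
def edot {M : ℕ} (v w : Fin M → ℝ) : ℝ := ∑ i, v i * w i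

/-- The closed Euclidean ball of radius `t` centered at the origin in `ℝ^M`. -/
def eball (M : ℕ) (t : ℝ) : Set (Fin M → ℝ) := {w | Real.sqrt (∑ i, w i ^ 2) ≤ t}

/-- `A(𝒱, s) = {w : vᵀw ≤ s for all v ∈ 𝒱}`. -/
def epoly {M : ℕ} (𝒱 : Finset (Fin M → ℝ)) (s : ℝ) : Set (Fin M → ℝ) :=
  {w | ∀ v ∈ 𝒱, edot v w ≤ s}

/-!
Take a maximal `δ`-separated set `T` on the unit sphere, with `δ² = 2ε / (1 + ε)`. The open balls
of radius `δ / 2` around its points are disjoint and lie in the shell between the spheres of radii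
`1 ± δ / 2`, so comparing volumes bounds `#T`. By maximality `T` is a `δ`-net of the sphere, so
every unit vector `u` has some `v ∈ T` with `⟪v, u⟫ = 1 - ‖u - v‖² / 2 > 1 / (1 + ε)`: this
gives `A(T, t / (1 + ε)) ⊆ B_t`, while `B_t ⊆ A(T, t)` is Cauchy–Schwarz.
-/

open Finset Metric Module
open scoped RealInnerProductSpace

theorem mul_one_add_pow_sub_one_sub_pow_le {r s : ℝ} (hr : 0 ≤ r) (hrs : r ≤ s) (n : ℕ) :
    s * ((1 + r) ^ n - (1 - r) ^ n) ≤ r * ((1 + s) ^ n - (1 - s) ^ n) := by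
  have binomial (x : ℝ) : (1 + x) ^ n - (1 - x) ^ n =
      ∑ k ∈ range (n + 1), (x ^ k - (-x) ^ k) * n.choose k := by
    rw [add_comm 1 x, sub_eq_neg_add (1 : ℝ), add_pow, add_pow, ← sum_sub_distrib]
    exact sum_congr rfl fun k _ => by ring
  rw [binomial, binomial, mul_sum, mul_sum]
  refine sum_le_sum fun k _ => ?_
  rw [← mul_assoc, ← mul_assoc]
  refine mul_le_mul_of_nonneg_right ?_ (Nat.cast_nonneg _)
  rcases Nat.even_or_odd k with hk | ⟨m, rfl⟩
  · simp [hk.neg_pow]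
  · have hpow : r ^ (2 * m) ≤ s ^ (2 * m) := pow_le_pow_left₀ hr hrs _
    rw [Odd.neg_pow ⟨m, rfl⟩, Odd.neg_pow ⟨m, rfl⟩, pow_succ, pow_succ]
    nlinarith [mul_nonneg hr (hr.trans hrs)]

theorem two_mul_three_halves_pow_le {n : ℕ} (hn : 3 ≤ n) :
    2 * (3 / 2 : ℝ) ^ n ≤ (2 * √2) ^ (n - 1) := by
  induction n, hn using Nat.le_induction with
  | base => norm_num [mul_pow]
  | succ n hn ih =>
    have h32 : (3 / 2 : ℝ) ≤ 2 * √2 := by nlinarith [Real.one_lt_sqrt_two]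
    rw [show n + 1 - 1 = n - 1 + 1 by omega, pow_succ, pow_succ, ← mul_assoc]
    exact mul_le_mul ih h32 (by norm_num) (by positivity)

theorem one_add_pow_sub_one_sub_pow_le {r : ℝ} (hr : 0 ≤ r) (hr2 : r ≤ 1 / 2) {n : ℕ} (hn : 3 ≤ n) :
    (1 + r) ^ n - (1 - r) ^ n ≤ r * (2 * √2) ^ (n - 1) := by
  have hmono : (1 + r) ^ n - (1 - r) ^ n ≤ 2 * r * ((3 / 2) ^ n - (1 / 2) ^ n) := by
    have := mul_one_add_pow_sub_one_sub_pow_le hr hr2 n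
    norm_num at this
    linarith
  calc (1 + r) ^ n - (1 - r) ^ n ≤ r * (2 * (3 / 2) ^ n) := by
        nlinarith [mul_nonneg hr (pow_nonneg (by norm_num : (0 : ℝ) ≤ 1 / 2) n)]
    _ ≤ r * (2 * √2) ^ (n - 1) := mul_le_mul_of_nonneg_left (two_mul_three_halves_pow_le hn) hr

theorem Finset.exists_maximal_of_card_le {α : Type*} [DecidableEq α] {P : Finset α → Prop}
    {N : ℕ} (hempty : P ∅) (hcard : ∀ T, P T → T.card ≤ N) :
    ∃ T, P T ∧ ∀ a ∉ T, ¬ P (insert a T) := by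
  by_contra! h
  have grow (k : ℕ) : ∃ T, P T ∧ k ≤ T.card := by
    induction k with
    | zero => exact ⟨∅, hempty, le_rfl⟩
    | succ k ih =>
      obtain ⟨T, hT, hk⟩ := ih
      obtain ⟨a, ha, haT⟩ := h T hT
      exact ⟨insert a T, haT, by rw [card_insert_of_notMem ha]; omega⟩
  obtain ⟨T, hT, hN⟩ := grow (N + 1)
  have := hcard T hT
  omega

theorem card_mul_pow_le_of_separated_subset_sphere {E : Type*} [NormedAddCommGroup E]
    [NormedSpace ℝ E] [FiniteDimensional ℝ E] [Nontrivial E] [MeasurableSpace E] [BorelSpace E]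
    (μ : Measure E) [μ.IsAddHaarMeasure] {T : Finset E} {r : ℝ} (hr : 0 < r) (hr1 : r ≤ 1)
    (hT : (T : Set E) ⊆ sphere 0 1) (hsep : (T : Set E).Pairwise fun v w => 2 * r ≤ dist v w) :
    T.card * r ^ finrank ℝ E ≤ (1 + r) ^ finrank ℝ E - (1 - r) ^ finrank ℝ E := by
  have ball_real (x : E) {ρ : ℝ} (hρ : 0 ≤ ρ) :
      μ.real (ball x ρ) = ρ ^ finrank ℝ E * μ.real (ball 0 1) := by
    rw [measureReal_def, Measure.addHaar_ball μ x hρ, ENNReal.toReal_mul,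
      ENNReal.toReal_ofReal (by positivity), measureReal_def]
  have hunit : 0 < μ.real (ball (0 : E) 1) :=
    ENNReal.toReal_pos (measure_ball_pos μ 0 one_pos).ne' measure_ball_lt_top.ne
  have hdisj : (T : Set E).PairwiseDisjoint (ball · r) := fun v hv w hw hvw =>
    ball_disjoint_ball (by linarith [hsep hv hw hvw])
  have hshell : (⋃ v ∈ T, ball v r) ⊆ ball 0 (1 + r) \ ball 0 (1 - r) := by
    simp only [Set.iUnion_subset_iff]
    intro v hv x hx
    have hv1 : ‖v‖ = 1 := by simpa using hT hv
    rw [mem_ball, dist_eq_norm] at hx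
    simp only [Set.mem_sdiff, mem_ball_zero_iff, not_lt]
    constructor <;> linarith [norm_sub_norm_le x v, norm_sub_norm_le v x, norm_sub_rev x v]
  have hvol := measureReal_mono (μ := μ) hshell
    (measure_ne_top_of_subset Set.sdiff_subset measure_ball_lt_top.ne)
  rw [measureReal_biUnion_finset hdisj fun _ _ => measurableSet_ball,
    measureReal_sdiff (ball_subset_ball (by linarith)) measurableSet_ball,
    ball_real 0 (ρ := 1 + r) (by linarith), ball_real 0 (ρ := 1 - r) (by linarith),
    sum_congr rfl fun v _ => ball_real v hr.le, sum_const, nsmul_eq_mul] at hvol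
  exact le_of_mul_le_mul_right (by linarith) hunit

theorem exists_finset_sphere_dist_lt {E : Type*} [NormedAddCommGroup E] [NormedSpace ℝ E]
    [FiniteDimensional ℝ E] (hE : 3 ≤ finrank ℝ E) {δ : ℝ} (hδ : 0 < δ) (hδ1 : δ ≤ 1) :
    ∃ T : Finset E, (T : Set E) ⊆ sphere 0 1 ∧ (T.card : ℝ) ≤ (4 * √2 / δ) ^ (finrank ℝ E - 1) ∧
      ∀ u ∈ sphere (0 : E) 1, ∃ v ∈ T, dist u v < δ := by
  classical
  borelize E
  have : Nontrivial E := Module.nontrivial_of_finrank_pos (R := ℝ) (by omega)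
  have hcard (T : Finset E) (hT : (T : Set E) ⊆ sphere 0 1)
      (hsep : (T : Set E).Pairwise fun v w => δ ≤ dist v w) :
      (T.card : ℝ) ≤ (4 * √2 / δ) ^ (finrank ℝ E - 1) := by
    have hpack := card_mul_pow_le_of_separated_subset_sphere Measure.addHaar (r := δ / 2)
      (by positivity) (by linarith) hT (by convert hsep using 4; ring)
    have hshell := one_add_pow_sub_one_sub_pow_le (r := δ / 2) (by positivity) (by linarith) hE
    have hpow : (δ / 2) ^ finrank ℝ E = δ / 2 * (δ / 2) ^ (finrank ℝ E - 1) := by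
      rw [← pow_succ', Nat.sub_add_cancel (by omega)]
    rw [show 4 * √2 / δ = 2 * √2 / (δ / 2) by field_simp; ring, div_pow,
      le_div_iff₀ (by positivity)]
    rw [hpow] at hpack
    exact le_of_mul_le_mul_left (by linarith) (half_pos hδ)
  obtain ⟨T, ⟨hT, hsep⟩, hmax⟩ := Finset.exists_maximal_of_card_le
    (P := fun T : Finset E =>
      (T : Set E) ⊆ sphere 0 1 ∧ (T : Set E).Pairwise fun v w => δ ≤ dist v w)
    (N := ⌊(4 * √2 / δ) ^ (finrank ℝ E - 1)⌋₊) (by simp)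
    fun T hT => Nat.le_floor (hcard T hT.1 hT.2)
  refine ⟨T, hT, hcard T hT hsep, fun u hu => ?_⟩
  by_contra! hfar
  have huT : u ∉ T := fun h => by simpa [hδ.not_ge] using hfar u h
  refine hmax u huT ⟨?_, ?_⟩ <;> rw [coe_insert]
  · exact Set.insert_subset hu hT
  · exact hsep.insert fun v hv _ => ⟨hfar v hv, dist_comm u v ▸ hfar v hv⟩

theorem four_mul_sqrt_two_div_pow {ε : ℝ} (hε : 0 < ε) (k : ℕ) :
    (4 * √2 / √(2 * ε / (1 + ε))) ^ k = (1 + ε⁻¹) ^ ((k : ℝ) / 2) * 4 ^ k := by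
  have hbase : 4 * √2 / √(2 * ε / (1 + ε)) = 4 * √(1 + ε⁻¹) := by
    rw [mul_div_assoc, ← Real.sqrt_div zero_le_two]
    congr 2
    field_simp
    ring
  rw [hbase, mul_pow, mul_comm, Real.sqrt_eq_rpow, ← Real.rpow_natCast,
    ← Real.rpow_mul (by positivity)]
  ring_nf

theorem exists_finset_sphere_norm_le_mul_inner {E : Type*} [NormedAddCommGroup E]
    [InnerProductSpace ℝ E] [FiniteDimensional ℝ E] (hE : 3 ≤ finrank ℝ E) {ε : ℝ} (hε : 0 < ε)
    (hε1 : ε ≤ 1) :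
    ∃ T : Finset E, (T : Set E) ⊆ sphere 0 1 ∧
      (T.card : ℝ) ≤ (1 + ε⁻¹) ^ (((finrank ℝ E : ℝ) - 1) / 2) * 4 ^ (finrank ℝ E - 1) ∧
      ∀ w : E, ∃ v ∈ T, ‖w‖ ≤ (1 + ε) * ⟪v, w⟫ := by
  have : Nontrivial E := Module.nontrivial_of_finrank_pos (R := ℝ) (by omega)
  set δ := √(2 * ε / (1 + ε))
  have hδsq : δ ^ 2 = 2 * ε / (1 + ε) := Real.sq_sqrt (by positivity)
  have hδ1 : δ ≤ 1 := Real.sqrt_le_one.mpr <| (div_le_one (by linarith)).mpr (by linarith)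
  obtain ⟨T, hT, hcard, hnet⟩ := exists_finset_sphere_dist_lt hE (by positivity) hδ1
  have hunit (u : E) (hu : u ∈ sphere 0 1) : ∃ v ∈ T, 1 ≤ (1 + ε) * ⟪v, u⟫ := by
    obtain ⟨v, hv, huv⟩ := hnet u hu
    have hv1 : ‖v‖ = 1 := by simpa using hT hv
    have hu1 : ‖u‖ = 1 := by simpa using hu
    have hdist : dist u v ^ 2 = 2 - 2 * ⟪v, u⟫ := by
      rw [dist_eq_norm, norm_sub_sq_real, hu1, hv1, real_inner_comm]
      ring
    have hlt : dist u v ^ 2 < δ ^ 2 := pow_lt_pow_left₀ huv dist_nonneg two_ne_zero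
    rw [hdist, hδsq, lt_div_iff₀ (by linarith)] at hlt
    exact ⟨v, hv, by nlinarith⟩
  refine ⟨T, hT, hcard.trans_eq ?_, fun w => ?_⟩
  · rw [four_mul_sqrt_two_div_pow hε, Nat.cast_sub (by omega), Nat.cast_one]
  · rcases eq_or_ne w 0 with rfl | hw
    · obtain ⟨u, hu⟩ := (NormedSpace.sphere_nonempty (E := E)).mpr zero_le_one
      obtain ⟨v, hv, -⟩ := hunit u hu
      exact ⟨v, hv, by simp⟩
    · obtain ⟨v, hv, hvw⟩ := hunit (‖w‖⁻¹ • w) (by simp [norm_smul, hw])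
      refine ⟨v, hv, ?_⟩
      rw [real_inner_smul_right, mul_left_comm, ← div_eq_inv_mul,
        le_div_iff₀ (norm_pos_iff.mpr hw), one_mul] at hvw
      exact hvw

theorem setOf_forall_inner_le_subset_closedBall {E : Type*} [NormedAddCommGroup E]
    [InnerProductSpace ℝ E] {T : Set E} {c : ℝ} (hc : 0 < c)
    (hT : ∀ w : E, ∃ v ∈ T, ‖w‖ ≤ c * ⟪v, w⟫) (t : ℝ) :
    {w : E | ∀ v ∈ T, ⟪v, w⟫ ≤ t / c} ⊆ closedBall 0 t := by
  intro w hw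
  obtain ⟨v, hv, hvw⟩ := hT w
  rw [mem_closedBall_zero_iff]
  calc ‖w‖ ≤ c * ⟪v, w⟫ := hvw
    _ ≤ c * (t / c) := mul_le_mul_of_nonneg_left (hw v hv) hc.le
    _ = t := mul_div_cancel₀ t hc.ne'

theorem closedBall_subset_setOf_forall_inner_le {E : Type*} [NormedAddCommGroup E]
    [InnerProductSpace ℝ E] {T : Set E} (hT : T ⊆ sphere 0 1) (t : ℝ) :
    closedBall 0 t ⊆ {w : E | ∀ v ∈ T, ⟪v, w⟫ ≤ t} := by
  intro w hw v hv
  calc ⟪v, w⟫ ≤ ‖v‖ * ‖w‖ := real_inner_le_norm v w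
    _ = ‖w‖ := by rw [mem_sphere_zero_iff_norm.mp (hT hv), one_mul]
    _ ≤ t := mem_closedBall_zero_iff.mp hw

theorem eball_eq_preimage_closedBall (M : ℕ) (t : ℝ) :
    eball M t = WithLp.toLp 2 ⁻¹' closedBall (0 : EuclideanSpace ℝ (Fin M)) t := by
  ext w
  simp [_root_.eball, EuclideanSpace.norm_eq]

theorem epoly_map_ofLp {M : ℕ} (T : Finset (EuclideanSpace ℝ (Fin M))) (s : ℝ) :
    epoly (T.map ⟨WithLp.ofLp, WithLp.ofLp_injective 2⟩) s =
      WithLp.toLp 2 ⁻¹' {w | ∀ v ∈ T, ⟪v, w⟫ ≤ s} := by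
  ext w
  simp only [epoly, edot, Set.mem_ofPred_eq, Set.mem_preimage, forall_mem_map,
    Function.Embedding.coeFn_mk]
  simp [PiLp.inner_apply, mul_comm]

theorem ball_approx_by_polytope_general (M : ℕ) (hM : 3 ≤ M) (ε t : ℝ)
    (hε : 0 < ε) (hε1 : ε ≤ 1) :
    ∃ 𝒱 : Finset (Fin M → ℝ),
      (∀ v ∈ 𝒱, ∑ i, v i ^ 2 = 1) ∧
      (𝒱.card : ℝ) ≤ (1 + ε⁻¹) ^ (((M : ℝ) - 1) / 2) * 4 ^ (M - 1) ∧
      epoly 𝒱 (t / (1 + ε)) ⊆ eball M t ∧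
      eball M t ⊆ epoly 𝒱 t := by
  obtain ⟨T, hT, hcard, hnet⟩ := exists_finset_sphere_norm_le_mul_inner
    (E := EuclideanSpace ℝ (Fin M)) (by simpa using hM) hε hε1
  refine ⟨T.map ⟨WithLp.ofLp, WithLp.ofLp_injective 2⟩, ?_, by simpa using hcard, ?_, ?_⟩
  · simp only [mem_map, Function.Embedding.coeFn_mk]
    rintro _ ⟨v, hv, rfl⟩
    rw [← EuclideanSpace.real_norm_sq_eq, mem_sphere_zero_iff_norm.mp (hT hv), one_pow]
  · rw [epoly_map_ofLp, eball_eq_preimage_closedBall]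
    exact Set.preimage_mono (setOf_forall_inner_le_subset_closedBall (by linarith) hnet t)
  · rw [epoly_map_ofLp, eball_eq_preimage_closedBall]
    exact Set.preimage_mono (closedBall_subset_setOf_forall_inner_le hT t)

/-- approximation of the Euclidean ball of radius `t` by a polytope generated
by at most `(1 + ε⁻¹)^((M-1)/2) · 4^(M-1)` unit vectors. -/
theorem ball_approx_by_polytope (M : ℕ) (hM : 3 ≤ M) (ε t : ℝ)
    (hε : 0 < ε) (hε1 : ε ≤ 1) (ht : ε ≤ t) :
    ∃ 𝒱 : Finset (Fin M → ℝ),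
      (∀ v ∈ 𝒱, ∑ i, v i ^ 2 = 1) ∧
      (𝒱.card : ℝ) ≤ (1 + ε⁻¹) ^ (((M : ℝ) - 1) / 2) * 4 ^ (M - 1) ∧
      epoly 𝒱 (t / (1 + ε)) ⊆ eball M t ∧
      eball M t ⊆ epoly 𝒱 t :=
  ball_approx_by_polytope_general M hM ε t hε hε1
end
end

section
/- For every pair of real numbers t, ε with t ≥ ε > 0 and all integers K ≥ 1 and M ≥ 3, there exists a finite collection 𝒱 of unit vectors in (ℝ^M)^K such that: (a) |𝒱| ≤ K(1 + t ε^{-1})^{(M−1)/2} · 4^{M−1}, and consequently log|𝒱| ≤ 3M log(K(1 + t ε^{-1})); (b) E_{t−ε} ⊆ A(𝒱, t−ε) ⊆ E_t ⊆ A(𝒱, t) ⊆ E_{t+ε}; and (c) for each v ∈ 𝒱 there is exactly one k ∈ {1,…,K} with π_k v ≠ 0. -/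
open MeasureTheory ProbabilityTheory Real
open scoped ENNReal NNReal

noncomputable section

/-- The Euclidean dot product on `(ℝ^M)^K`, viewed as `K` blocks of size `M`. -/
def bdot {K M : ℕ} (v w : Fin K → Fin M → ℝ) : ℝ := ∑ k, ∑ j, v k j * w k j

/-- The Euclidean norm `‖π_k x‖₂` of the `k`-th block of `x ∈ (ℝ^M)^K`. -/
def blockNorm {K M : ℕ} (x : Fin K → Fin M → ℝ) (k : Fin K) : ℝ :=
  Real.sqrt (∑ j, x k j ^ 2)

/-- `E_t = {x : max_k ‖π_k x‖₂ ≤ t}`. -/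
def Ecube (K M : ℕ) (t : ℝ) : Set (Fin K → Fin M → ℝ) := {x | ∀ k, blockNorm x k ≤ t}

/-- `A(𝒱, s) = {w : vᵀw ≤ s for all v ∈ 𝒱}`. -/
def Apoly {K M : ℕ} (𝒱 : Finset (Fin K → Fin M → ℝ)) (s : ℝ) :
    Set (Fin K → Fin M → ℝ) := {w | ∀ v ∈ 𝒱, bdot v w ≤ s}

/-- A centered Gaussian random vector taking values in `(ℝ^M)^K`: every linear functional
of it is a centered one-dimensional Gaussian. -/
def IsCenteredGaussianBlk {Ω : Type*} [MeasureSpace Ω] {K M : ℕ}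
    (X : Ω → Fin K → Fin M → ℝ) : Prop :=
  Measurable X ∧ ∀ a : Fin K → Fin M → ℝ, ∃ v : NNReal,
    Measure.map (fun ω => bdot a (X ω)) (ℙ : Measure Ω) = gaussianReal 0 v

/-!
A maximal `2a`-separated subset `S` of the unit sphere of `ℝ^M` is a `2a`-net of it. The balls of
radius `a` around its points are disjoint and lie in the annulus `1 - a ≤ ‖x‖ ≤ 1 + a`, so comparing
volumes gives `|S| a^M ≤ (1 + a)^M - (1 - a)^M ≤ 2a (3/2)^M`. Every unit vector `u` is within `2a`
of some `v ∈ S`, whence `⟪v, u⟫ ≥ 1 - 2a²`, and the polytope `{x | ⟪v, x⟫ ≤ s, v ∈ S}` lies between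
the balls of radii `s` and `s / (1 - 2a²)`. Placing `S` in each of the `K` blocks does the same
blockwise for `E_s`, and `2a² = ε / (t + ε)` makes the ratio `(t + ε) / t`.
-/

open Metric Module
open scoped InnerProductSpace

lemma one_add_pow_sub_one_sub_pow_le_s1 (n : ℕ) {a : ℝ} (ha : 0 ≤ a) (ha' : a ≤ 1 / 2) :
    (1 + a) ^ n - (1 - a) ^ n ≤ 2 * a * (3 / 2) ^ n := by
  have binom : ∀ x : ℝ, (1 + x) ^ n - (1 - x) ^ n
      = ∑ m ∈ Finset.range (n + 1), (1 - (-1) ^ m) * x ^ m * n.choose m := by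
    intro x
    rw [show 1 - x = -x + 1 by ring, add_comm 1 x, add_pow, add_pow, ← Finset.sum_sub_distrib]
    refine Finset.sum_congr rfl fun m _ => ?_
    rw [neg_pow]
    ring
  have termwise : ∀ m, (1 - (-1) ^ m) * a ^ m ≤ 2 * a * ((1 - (-1) ^ m) * (1 / 2) ^ m) := by
    rintro (_ | m)
    · simp
    · have hsign : (0 : ℝ) ≤ 1 - (-1) ^ (m + 1) := by
        rcases neg_one_pow_eq_or ℝ (m + 1) with h | h <;> rw [h] <;> norm_num
      have hpow : a ^ m ≤ (1 / 2) ^ m := pow_le_pow_left₀ ha ha' m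
      calc (1 - (-1) ^ (m + 1)) * a ^ (m + 1) = (1 - (-1) ^ (m + 1)) * a * a ^ m := by ring
        _ ≤ (1 - (-1) ^ (m + 1)) * a * (1 / 2) ^ m := by gcongr
        _ = 2 * a * ((1 - (-1) ^ (m + 1)) * (1 / 2) ^ (m + 1)) := by ring
  calc (1 + a) ^ n - (1 - a) ^ n
      ≤ 2 * a * ((1 + 1 / 2) ^ n - (1 - 1 / 2) ^ n) := by
        rw [binom, binom, Finset.mul_sum]
        refine Finset.sum_le_sum fun m _ => ?_
        convert mul_le_mul_of_nonneg_right (termwise m) (Nat.cast_nonneg (n.choose m)) using 1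
        ring
    _ ≤ 2 * a * (3 / 2) ^ n := by
        gcongr
        norm_num

theorem card_mul_pow_le_of_isSeparated_sphere {E : Type*} [NormedAddCommGroup E]
    [NormedSpace ℝ E] [FiniteDimensional ℝ E] [MeasurableSpace E] [BorelSpace E]
    {s : Finset E} {a : ℝ} (ha : 0 ≤ a) (ha' : a < 1) (hs : (s : Set E) ⊆ sphere 0 1)
    (hsep : IsSeparated (ENNReal.ofReal (2 * a)) (s : Set E)) :
    s.card * a ^ finrank ℝ E ≤ (1 + a) ^ finrank ℝ E - (1 - a) ^ finrank ℝ E := by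
  obtain ⟨K₀⟩ : Nonempty (TopologicalSpace.PositiveCompacts E) := inferInstance
  set μ : Measure E := Measure.addHaarMeasure K₀
  set n := finrank ℝ E
  set v := μ (ball 0 1)
  have hv : v ≠ 0 := (measure_ball_pos μ 0 one_pos).ne'
  have hv' : v ≠ ⊤ := measure_ball_lt_top.ne
  have hdisj : (s : Set E).PairwiseDisjoint fun x => closedBall x a := by
    intro x hx y hy hxy
    refine closedBall_disjoint_closedBall ?_
    have : ENNReal.ofReal (2 * a) < edist x y := hsep hx hy hxy
    rw [edist_dist, ENNReal.ofReal_lt_ofReal_iff_of_nonneg (by positivity)] at this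
    linarith
  have hsub : (⋃ x ∈ s, closedBall x a) ⊆ closedBall 0 (1 + a) \ ball 0 (1 - a) := by
    simp only [Set.iUnion_subset_iff]
    intro x hx z hz
    have hx1 : ‖x‖ = 1 := by simpa using hs hx
    rw [mem_closedBall, dist_eq_norm] at hz
    simp only [Set.mem_sdiff, mem_closedBall_zero_iff, mem_ball_zero_iff, not_lt]
    constructor
    · linarith [norm_le_insert' z x]
    · linarith [norm_sub_norm_le x z, norm_sub_rev x z]
  have hvol : (s.card : ℝ≥0∞) * ENNReal.ofReal (a ^ n) * v
      ≤ ENNReal.ofReal ((1 + a) ^ n - (1 - a) ^ n) * v := by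
    calc (s.card : ℝ≥0∞) * ENNReal.ofReal (a ^ n) * v
        = ∑ x ∈ s, μ (closedBall x a) := by
          simp [Measure.addHaar_closedBall μ _ ha, mul_assoc, μ, v, n]
      _ = μ (⋃ x ∈ s, closedBall x a) :=
          (measure_biUnion_finset hdisj fun _ _ => measurableSet_closedBall).symm
      _ ≤ μ (closedBall 0 (1 + a) \ ball 0 (1 - a)) := measure_mono hsub
      _ = ENNReal.ofReal ((1 + a) ^ n - (1 - a) ^ n) * v := by
          rw [measure_sdiff (ball_subset_closedBall.trans (closedBall_subset_closedBall
              (by linarith))) measurableSet_ball.nullMeasurableSet measure_ball_lt_top.ne,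
            Measure.addHaar_closedBall μ _ (by linarith),
            Measure.addHaar_ball_of_pos μ _ (r := 1 - a) (by linarith),
            ← ENNReal.sub_mul (fun _ _ => hv'), ← ENNReal.ofReal_sub _ (by positivity)]
  rw [ENNReal.mul_le_mul_iff_left hv hv', ← ENNReal.ofReal_natCast,
    ← ENNReal.ofReal_mul (by positivity)] at hvol
  exact (ENNReal.ofReal_le_ofReal_iff (sub_nonneg.2 (by gcongr; linarith))).1 hvol

theorem exists_finset_sphere_net {E : Type*} [NormedAddCommGroup E] [NormedSpace ℝ E]
    [FiniteDimensional ℝ E] [MeasurableSpace E] [BorelSpace E] {a : ℝ} (ha : 0 < a)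
    (ha' : a ≤ 1 / 2) :
    ∃ S : Finset E, (S : Set E) ⊆ sphere 0 1 ∧
      S.card * a ^ finrank ℝ E ≤ 2 * a * (3 / 2) ^ finrank ℝ E ∧
      ∀ u ∈ sphere (0 : E) 1, ∃ v ∈ S, ‖u - v‖ ≤ 2 * a := by
  set δ : ℝ≥0 := (2 * a).toNNReal
  have hfin : packingNumber δ (sphere (0 : E) 1) ≠ ⊤ := by
    obtain ⟨N, -, hN, hcover⟩ := exists_finite_isCover_of_isCompact
      (ε := a.toNNReal) (by simpa using ha) (isCompact_sphere (0 : E) 1)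
    have h2 : 2 * a.toNNReal = δ := by simp [δ, Real.toNNReal_mul zero_le_two]
    refine ne_top_of_le_ne_top (Set.encard_ne_top_iff.2 hN) ?_
    exact h2 ▸ (packingNumber_two_mul_le_externalCoveringNumber _ _).trans
      hcover.externalCoveringNumber_le_encard
  have hfinite := Set.encard_ne_top_iff.1 (encard_maximalSeparatedSet hfin ▸ hfin)
  refine ⟨hfinite.toFinset, by simpa using maximalSeparatedSet_subset, ?_, ?_⟩
  · refine (card_mul_pow_le_of_isSeparated_sphere ha.le (by linarith)
      (by simpa using maximalSeparatedSet_subset) ?_).trans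
      (one_add_pow_sub_one_sub_pow_le_s1 _ ha.le ha')
    rw [Set.Finite.coe_toFinset]
    exact isSeparated_maximalSeparatedSet
  · intro u hu
    obtain ⟨v, hv, huv⟩ := isCover_maximalSeparatedSet hfin hu
    refine ⟨v, by simpa using hv, ?_⟩
    rwa [← dist_eq_norm, ← edist_le_ofReal (by positivity)]

section InnerProduct

variable {F : Type*} [NormedAddCommGroup F] [InnerProductSpace ℝ F]

lemma one_sub_sq_div_two_le_inner {u v : F} {δ : ℝ} (hu : ‖u‖ = 1) (hv : ‖v‖ = 1)
    (huv : ‖u - v‖ ≤ δ) : 1 - δ ^ 2 / 2 ≤ ⟪u, v⟫_ℝ := by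
  have h := norm_sub_sq_real u v
  rw [hu, hv] at h
  nlinarith [pow_le_pow_left₀ (norm_nonneg _) huv 2]

lemma mul_norm_le_of_forall_inner_le {S : Set F} {c s : ℝ}
    (hS : ∀ u : F, ‖u‖ = 1 → ∃ v ∈ S, c ≤ ⟪v, u⟫_ℝ) (hs : 0 ≤ s) {x : F}
    (hx : ∀ v ∈ S, ⟪v, x⟫_ℝ ≤ s) : c * ‖x‖ ≤ s := by
  rcases eq_or_ne x 0 with rfl | hx0
  · simpa using hs
  obtain ⟨v, hvS, hv⟩ := hS (‖x‖⁻¹ • x) (norm_smul_inv_norm hx0)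
  rw [real_inner_smul_right] at hv
  calc c * ‖x‖ ≤ ‖x‖⁻¹ * ⟪v, x⟫_ℝ * ‖x‖ := by gcongr
    _ = ⟪v, x⟫_ℝ := by field_simp
    _ ≤ s := hx v hvS

end InnerProduct

section Blocks

variable {K M : ℕ}

lemma blockNorm_eq_norm (x : Fin K → Fin M → ℝ) (k : Fin K) :
    blockNorm x k = ‖WithLp.toLp 2 (x k)‖ := by
  simp [blockNorm, EuclideanSpace.norm_eq]

lemma bdot_single_left (k : Fin K) (y : EuclideanSpace ℝ (Fin M)) (x : Fin K → Fin M → ℝ) :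
    bdot (Pi.single k y.ofLp) x = ⟪y, WithLp.toLp 2 (x k)⟫_ℝ := by
  rw [bdot, Finset.sum_eq_single k (fun k' _ hk' => by simp [hk']) (by simp)]
  simp [PiLp.inner_apply, mul_comm]

lemma Ecube_mono {s s' : ℝ} (h : s ≤ s') : Ecube K M s ⊆ Ecube K M s' :=
  fun _ hx k => (hx k).trans h

open Classical in
def blockFamily (K : ℕ) (S : Finset (EuclideanSpace ℝ (Fin M))) :
    Finset (Fin K → Fin M → ℝ) :=
  (Finset.univ ×ˢ S).image fun p => Pi.single p.1 p.2.ofLp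

variable {S : Finset (EuclideanSpace ℝ (Fin M))}

lemma mem_blockFamily {v : Fin K → Fin M → ℝ} :
    v ∈ blockFamily K S ↔ ∃ k, ∃ y ∈ S, Pi.single k y.ofLp = v := by
  simp [blockFamily]

lemma card_blockFamily_le : (blockFamily K S).card ≤ K * S.card := by
  classical
  exact Finset.card_image_le.trans (by simp)

lemma bdot_self_of_mem_blockFamily {v : Fin K → Fin M → ℝ}
    (hS : (S : Set (EuclideanSpace ℝ (Fin M))) ⊆ sphere 0 1) (hv : v ∈ blockFamily K S) :
    bdot v v = 1 := by
  obtain ⟨k, y, hy, rfl⟩ := mem_blockFamily.1 hv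
  have hy1 : ‖y‖ = 1 := by simpa using hS hy
  simp [bdot_single_left, hy1]

lemma existsUnique_ne_zero_of_mem_blockFamily {v : Fin K → Fin M → ℝ}
    (hS : (S : Set (EuclideanSpace ℝ (Fin M))) ⊆ sphere 0 1) (hv : v ∈ blockFamily K S) :
    ∃! k, v k ≠ 0 := by
  obtain ⟨k, y, hy, rfl⟩ := mem_blockFamily.1 hv
  have hy0 : y.ofLp ≠ 0 := by
    intro h
    have hy1 : ‖y‖ = 1 := by simpa using hS hy
    simp [show y = 0 by simpa using congrArg (WithLp.toLp 2) h] at hy1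
  exact ⟨k, by simpa using hy0, fun k' hk' => by_contra fun h => hk' (by simp [h])⟩

lemma Ecube_subset_Apoly_blockFamily (hS : (S : Set (EuclideanSpace ℝ (Fin M))) ⊆ sphere 0 1)
    (s : ℝ) : Ecube K M s ⊆ Apoly (blockFamily K S) s := by
  intro x hx v hv
  obtain ⟨k, y, hy, rfl⟩ := mem_blockFamily.1 hv
  have hy1 : ‖y‖ = 1 := by simpa using hS hy
  calc bdot (Pi.single k y.ofLp) x = ⟪y, WithLp.toLp 2 (x k)⟫_ℝ := bdot_single_left k y x
    _ ≤ ‖y‖ * ‖WithLp.toLp 2 (x k)‖ := real_inner_le_norm _ _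
    _ ≤ s := by simpa [hy1, blockNorm_eq_norm] using hx k

lemma Apoly_blockFamily_subset_Ecube {c s : ℝ} (hc : 0 < c) (hs : 0 ≤ s)
    (hS : ∀ u : EuclideanSpace ℝ (Fin M), ‖u‖ = 1 → ∃ v ∈ S, c ≤ ⟪v, u⟫_ℝ) :
    Apoly (blockFamily K S) s ⊆ Ecube K M (s / c) := by
  intro x hx k
  rw [blockNorm_eq_norm, le_div_iff₀' hc]
  refine mul_norm_le_of_forall_inner_le (S := S) hS hs fun y hy => ?_
  rw [← bdot_single_left]
  exact hx _ (mem_blockFamily.2 ⟨k, y, hy, rfl⟩)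

end Blocks

lemma two_le_one_add_mul_inv {t ε : ℝ} (hε : 0 < ε) (ht : ε ≤ t) : 2 ≤ 1 + t * ε⁻¹ := by
  rw [← div_eq_mul_inv]
  linarith [(one_le_div hε).2 ht]

lemma three_mul_nine_div_four_pow_le {n : ℕ} (hn : 2 ≤ n) : 3 * (9 / 4 : ℝ) ^ n ≤ 4 ^ n := by
  induction n, hn using Nat.le_induction with
  | base => norm_num
  | succ n _ ih =>
    rw [pow_succ, pow_succ]
    linarith [pow_nonneg (by norm_num : (0 : ℝ) ≤ 4) n]

lemma le_rpow_mul_four_pow_of_mul_pow_le {N X : ℝ} {n : ℕ} (hn : 2 ≤ n) (hX : 0 < X)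
    (h : N * (√(2 * X))⁻¹ ^ (n + 1) ≤ 2 * (√(2 * X))⁻¹ * (3 / 2) ^ (n + 1)) :
    N ≤ X ^ ((n : ℝ) / 2) * 4 ^ n := by
  rw [inv_pow, ← div_eq_mul_inv, div_le_iff₀ (by positivity)] at h
  have hsqrt : √(2 * X) ^ n ≤ (3 / 2) ^ n * X ^ ((n : ℝ) / 2) := by
    rw [Real.sqrt_mul zero_le_two, mul_pow, Real.sqrt_eq_rpow X,
      ← Real.rpow_natCast (X ^ (1 / 2 : ℝ)), ← Real.rpow_mul hX.le, one_div_mul_eq_div]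
    gcongr
    rw [Real.sqrt_le_left (by norm_num)]
    norm_num
  calc N ≤ 2 * (√(2 * X))⁻¹ * (3 / 2) ^ (n + 1) * √(2 * X) ^ (n + 1) := h
    _ = 3 * (3 / 2) ^ n * √(2 * X) ^ n := by field_simp; ring
    _ ≤ 3 * (3 / 2) ^ n * ((3 / 2) ^ n * X ^ ((n : ℝ) / 2)) := by gcongr
    _ = 3 * (9 / 4) ^ n * X ^ ((n : ℝ) / 2) := by
      rw [show (9 / 4 : ℝ) = 3 / 2 * (3 / 2) by norm_num, mul_pow]
      ring
    _ ≤ X ^ ((n : ℝ) / 2) * 4 ^ n := by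
      rw [mul_comm]
      gcongr
      exact three_mul_nine_div_four_pow_le hn

lemma log_le_three_mul_log_of_le {N K X : ℝ} {n : ℕ} (hN : 0 ≤ N) (hK : 1 ≤ K) (hX : 2 ≤ X)
    (h : N ≤ K * X ^ ((n : ℝ) / 2) * 4 ^ n) : log N ≤ 3 * (n + 1) * log (K * X) := by
  have hKX : 2 ≤ K * X := by nlinarith
  have hL : 0 ≤ log (K * X) := Real.log_nonneg (by linarith)
  rcases hN.eq_or_lt with rfl | hN
  · rw [Real.log_zero]
    positivity
  have h4 : log 4 = 2 * log 2 := by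
    rw [show (4 : ℝ) = 2 ^ 2 by norm_num, Real.log_pow, Nat.cast_ofNat]
  calc log N ≤ log (K * X ^ ((n : ℝ) / 2) * 4 ^ n) := Real.log_le_log hN h
    _ = log K + n / 2 * log X + n * (2 * log 2) := by
      rw [Real.log_mul (by positivity) (by positivity), Real.log_mul (by positivity)
        (by positivity), Real.log_rpow (by positivity), Real.log_pow, h4]
    _ ≤ log (K * X) + n / 2 * log (K * X) + n * (2 * log (K * X)) := by
      gcongr <;> nlinarith
    _ ≤ 3 * (n + 1) * log (K * X) := by nlinarith

theorem exists_finset_sphere_inner_ge {E : Type*} [NormedAddCommGroup E]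
    [InnerProductSpace ℝ E] [FiniteDimensional ℝ E] [MeasurableSpace E] [BorelSpace E] {n : ℕ}
    (hn : 2 ≤ n) (hE : finrank ℝ E = n + 1) {t ε : ℝ} (hε : 0 < ε) (ht : ε ≤ t) :
    ∃ S : Finset E, (S : Set E) ⊆ sphere 0 1 ∧
      (S.card : ℝ) ≤ (1 + t * ε⁻¹) ^ ((n : ℝ) / 2) * 4 ^ n ∧
      ∀ u : E, ‖u‖ = 1 → ∃ v ∈ S, t / (t + ε) ≤ ⟪v, u⟫_ℝ := by
  set X := 1 + t * ε⁻¹ with hX_def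
  have hX : 2 ≤ X := two_le_one_add_mul_inv hε ht
  have ha : (√(2 * X))⁻¹ ≤ 1 / 2 := by
    rw [one_div, inv_le_inv₀ (by positivity) two_pos, Real.le_sqrt zero_le_two (by positivity)]
    linarith
  obtain ⟨S, hS, hScard, hSnet⟩ := exists_finset_sphere_net (E := E) (by positivity) ha
  rw [hE] at hScard
  refine ⟨S, hS, le_rpow_mul_four_pow_of_mul_pow_le hn (by positivity) hScard, fun u hu => ?_⟩
  obtain ⟨v, hv, huv⟩ := hSnet u (by simpa using hu)
  refine ⟨v, hv, le_of_eq_of_le ?_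
    (real_inner_comm u v ▸ one_sub_sq_div_two_le_inner hu (by simpa using hS hv) huv)⟩
  have ht0 : 0 < t := hε.trans_le ht
  rw [mul_pow, inv_pow, Real.sq_sqrt (by positivity), hX_def]
  field_simp
  ring

/-- approximation of the sets `E_t` in `(ℝ^M)^K` by polytopes generated by
unit vectors supported on a single block. -/
theorem Ecube_approx_by_polytope (t ε : ℝ) (hε : 0 < ε) (ht : ε ≤ t)
    (K M : ℕ) (hK : 1 ≤ K) (hM : 3 ≤ M) :
    ∃ 𝒱 : Finset (Fin K → Fin M → ℝ),
      (∀ v ∈ 𝒱, bdot v v = 1) ∧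
      ((𝒱.card : ℝ) ≤ (K : ℝ) * (1 + t * ε⁻¹) ^ (((M : ℝ) - 1) / 2) * 4 ^ (M - 1) ∧
        Real.log (𝒱.card : ℝ) ≤ 3 * M * Real.log ((K : ℝ) * (1 + t * ε⁻¹))) ∧
      (Ecube K M (t - ε) ⊆ Apoly 𝒱 (t - ε) ∧ Apoly 𝒱 (t - ε) ⊆ Ecube K M t ∧
        Ecube K M t ⊆ Apoly 𝒱 t ∧ Apoly 𝒱 t ⊆ Ecube K M (t + ε)) ∧
      (∀ v ∈ 𝒱, ∃! k : Fin K, v k ≠ 0) := by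
  obtain ⟨n, rfl⟩ : ∃ n, M = n + 1 := ⟨M - 1, by omega⟩
  have ht0 : 0 < t := hε.trans_le ht
  obtain ⟨S, hS, hScard, hnet⟩ := exists_finset_sphere_inner_ge
    (E := EuclideanSpace ℝ (Fin (n + 1))) (by omega) finrank_euclideanSpace_fin hε ht
  have hAE (s : ℝ) (hs : 0 ≤ s) :
      Apoly (blockFamily K S) s ⊆ Ecube K (n + 1) (s * (t + ε) / t) := by
    simpa [div_div_eq_mul_div] using Apoly_blockFamily_subset_Ecube (by positivity) hs hnet
  have hcard : ((blockFamily K S).card : ℝ) ≤ K * (1 + t * ε⁻¹) ^ ((n : ℝ) / 2) * 4 ^ n := by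
    calc ((blockFamily K S).card : ℝ) ≤ K * S.card := by exact_mod_cast card_blockFamily_le
      _ ≤ K * ((1 + t * ε⁻¹) ^ ((n : ℝ) / 2) * 4 ^ n) := by gcongr
      _ = _ := by ring
  refine ⟨blockFamily K S, fun v hv => bdot_self_of_mem_blockFamily hS hv, ⟨?_, ?_⟩,
    ⟨Ecube_subset_Apoly_blockFamily hS _, (hAE _ (by linarith)).trans (Ecube_mono ?_),
      Ecube_subset_Apoly_blockFamily hS _, (hAE _ (by linarith)).trans (Ecube_mono ?_)⟩,
    fun v hv => existsUnique_ne_zero_of_mem_blockFamily hS hv⟩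
  · simpa using hcard
  · simpa using log_le_three_mul_log_of_le (Nat.cast_nonneg _) (by exact_mod_cast hK)
      (two_le_one_add_mul_inv hε ht) hcard
  · rw [div_le_iff₀ ht0]
    nlinarith
  · rw [mul_div_cancel_left₀ _ ht0.ne']
end
end

section
/- Let F and G be cumulative distribution functions on ℝ, let t* ∈ ℝ, δ > 0 and α ∈ ℝ, and suppose sup_{t ≥ t*} |F(t) − G(t)| ≤ δ. If q_F(α) > t*, then q_G(α−δ) ≤ q_F(α) ≤ q_G(α+δ). Moreover, if G(t*) + δ < α then q_F(α) > t*. -/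
open Filter Topology

noncomputable section

/-- A cumulative distribution function on `ℝ`: non-decreasing, right-continuous,
tending to `0` at `-∞` and to `1` at `+∞`. -/
def IsCDF (H : ℝ → ℝ) : Prop :=
  Monotone H ∧ (∀ x : ℝ, ContinuousWithinAt H (Set.Ici x) x) ∧
    Tendsto H atBot (𝓝 0) ∧ Tendsto H atTop (𝓝 1)

/-- The quantile function `q_H(α) = inf {t : H(t) ≥ α}`, with `inf ∅ = +∞`,
valued in the extended reals. -/
def quantileFn (H : ℝ → ℝ) (a : ℝ) : EReal :=
  sInf {x : EReal | ∃ t : ℝ, x = (t : EReal) ∧ a ≤ H t}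

/-! On `[t*, ∞)`, `F ≥ α` forces `G ≥ α - δ` and `G ≥ α + δ` forces `F ≥ α`, and an inclusion of
superlevel sets is an inequality of quantiles. The assumption `t* < q_F(α)` keeps `{F ≥ α}` inside
`(t*, ∞)`, and monotonicity of `G` keeps `{G ≥ α + δ}` there too. The last claim is
right-continuity of `F` at `t*`: `F(t*) < α` persists slightly to the right of `t*`. -/

section Quantile

variable {H : ℝ → ℝ} {a t : ℝ}

theorem quantileFn_le (h : a ≤ H t) : quantileFn H a ≤ t :=
  sInf_le ⟨t, rfl, h⟩

theorem lt_of_lt_quantileFn {x : EReal} (hx : x < quantileFn H a) (ht : a ≤ H t) : x < t :=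
  hx.trans_le (quantileFn_le ht)

theorem quantileFn_le_quantileFn {F G : ℝ → ℝ} {b : ℝ} (h : ∀ t, b ≤ G t → a ≤ F t) :
    quantileFn F a ≤ quantileFn G b :=
  sInf_le_sInf fun _ ⟨t, hx, ht⟩ => ⟨t, hx, h t ht⟩

theorem lt_quantileFn_iff (hmono : Monotone H) (hrc : ContinuousWithinAt H (Set.Ici t) t) :
    (t : EReal) < quantileFn H a ↔ H t < a := by
  refine ⟨fun h => not_le.mp fun ht => (lt_of_lt_quantileFn h ht).false, fun h => ?_⟩
  have hright : ∀ᶠ s in 𝓝[>] t, H s < a :=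
    (hrc.mono Set.Ioi_subset_Ici_self).eventually (Iio_mem_nhds h)
  obtain ⟨s, hHs, hts⟩ := (hright.and self_mem_nhdsWithin).exists
  calc (t : EReal) < s := EReal.coe_lt_coe_iff.mpr hts
    _ ≤ quantileFn H a := le_sInf fun _ ⟨u, hx, hu⟩ =>
        hx ▸ EReal.coe_le_coe_iff.mpr (hmono.reflect_lt (hHs.trans_le hu)).le

end Quantile

theorem kolmogorov_bound_to_quantile_bound_general
    (F G : ℝ → ℝ) (hF : IsCDF F) (hG : IsCDF G)
    (tstar δ : ℝ) (α : ℝ)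
    (hsup : ∀ t : ℝ, tstar ≤ t → |F t - G t| ≤ δ) :
    ((tstar : EReal) < quantileFn F α →
      quantileFn G (α - δ) ≤ quantileFn F α ∧ quantileFn F α ≤ quantileFn G (α + δ)) ∧
    (G tstar + δ < α → (tstar : EReal) < quantileFn F α) := by
  have hF_lt_iff := lt_quantileFn_iff (a := α) hF.1 (hF.2.1 tstar)
  have hclose : ∀ t, tstar ≤ t → -δ ≤ F t - G t ∧ F t - G t ≤ δ := fun t ht =>
    abs_le.mp (hsup t ht)
  refine ⟨fun hlt => ⟨quantileFn_le_quantileFn fun t ht => ?_,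
    quantileFn_le_quantileFn fun t ht => ?_⟩, fun hα => hF_lt_iff.2 ?_⟩
  · have htt : tstar ≤ t := EReal.coe_le_coe_iff.mp (lt_of_lt_quantileFn hlt ht).le
    linarith [hclose t htt]
  · have htt : tstar ≤ t := by
      by_contra! h
      linarith [hclose tstar le_rfl, hG.1 h.le, hF_lt_iff.1 hlt]
    linarith [hclose t htt]
  · linarith [hclose tstar le_rfl]

/-- a Kolmogorov-type bound on `[t*, ∞)` implies a bound between
quantiles. -/
theorem kolmogorov_bound_to_quantile_bound
    (F G : ℝ → ℝ) (hF : IsCDF F) (hG : IsCDF G)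
    (tstar δ : ℝ) (hδ : 0 < δ) (α : ℝ)
    (hsup : ∀ t : ℝ, tstar ≤ t → |F t - G t| ≤ δ) :
    ((tstar : EReal) < quantileFn F α →
      quantileFn G (α - δ) ≤ quantileFn F α ∧ quantileFn F α ≤ quantileFn G (α + δ)) ∧
    (G tstar + δ < α → (tstar : EReal) < quantileFn F α) :=
  kolmogorov_bound_to_quantile_bound_general F G hF hG tstar δ α hsup
end
end

section
/- If p ≥ 1 then ψ_p(x) := exp(x^p) − 1 is an Orlicz function. Moreover, for every 0 < p < 1 there exists an Orlicz function ψ̃_p such that for every real random variable X: ‖X‖_{ψ̃_p} ≤ ‖X‖_{ψ_p} ≤ C_{ψ_p} ‖X‖_{ψ̃_p}, where C_{ψ_p} := e^{−1} (e/(p log 2))^{1/p}. -/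
/-!
For `p ≥ 1`, `exp (x ^ p) - 1` is the increasing convex function `exp` composed with the
convex `x ^ p`. For `0 < p < 1`, `exp (x ^ p)` is convex only beyond its inflection point
`x ^ p = (1 - p) / p`, so we take `ψ̃_p x = max (exp (x ^ p) - exp v) 0` (`clippedExpRpow p v`)
with `v = exp (-p) / p ≥ (1 - p) / p`. Since `ψ̃_p ≤ ψ_p`, `‖X‖_{ψ̃_p} ≤ ‖X‖_{ψ_p}`.
Conversely, with `c = C_{ψ_p} ^ (-p) = p log 2 exp (p - 1) ≤ 1`, the tangent line of the
concave map `t ↦ t ^ c` at `t = exp v` gives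
`exp ((x / C_{ψ_p}) ^ p) ≤ exp (c v) + c exp ((c - 1) v) ψ̃_p x`, and `c v = log 2 / e`,
`v ≥ 1 / e`, `c ≤ log 2` bound the expectation of the right-hand side by
`2 ^ (1 / e) (1 + log 2 · e ^ (-1 / e)) ≈ 1.91 ≤ 2` whenever `E ψ̃_p (|X|) ≤ 1`.
-/

open MeasureTheory ProbabilityTheory Real
open scoped ENNReal NNReal

noncomputable section

/-- An Orlicz function: convex, non-decreasing and non-negative on `[0, ∞)`, vanishing
at `0`, and not identically zero there. -/
def IsOrliczFunction (ψ : ℝ → ℝ) : Prop :=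
  ψ 0 = 0 ∧ ConvexOn ℝ (Set.Ici 0) ψ ∧ MonotoneOn ψ (Set.Ici 0) ∧
    (∀ x ∈ Set.Ici (0 : ℝ), 0 ≤ ψ x) ∧ ∃ x ∈ Set.Ici (0 : ℝ), ψ x ≠ 0

/-- The Orlicz norm `‖X‖_ψ = inf {B > 0 : E[ψ(|X|/B)] ≤ 1}`, with `inf ∅ = ∞`. -/
def orliczNorm {Ω : Type*} [MeasureSpace Ω] (ψ : ℝ → ℝ) (X : Ω → ℝ) : ℝ≥0∞ :=
  sInf {B : ℝ≥0∞ | ∃ b : ℝ, 0 < b ∧ B = ENNReal.ofReal b ∧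
    ∫⁻ ω, ENNReal.ofReal (ψ (|X ω| / b)) ∂(ℙ : Measure Ω) ≤ 1}

/-- The `ψ_p` quasi-norm of a real random variable:
`inf {B > 0 : E[exp((|X|/B)^p)] ≤ 2}`, with `inf ∅ = ∞`. -/
def psiNorm {Ω : Type*} [MeasureSpace Ω] (p : ℝ) (X : Ω → ℝ) : ℝ≥0∞ :=
  sInf {B : ℝ≥0∞ | ∃ b : ℝ, 0 < b ∧ B = ENNReal.ofReal b ∧
    ∫⁻ ω, ENNReal.ofReal (Real.exp ((|X ω| / b) ^ p)) ∂(ℙ : Measure Ω) ≤ 2}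

open Set

lemma ConvexOn.exp {s : Set ℝ} {f : ℝ → ℝ} (hf : ConvexOn ℝ s f) :
    ConvexOn ℝ s (fun x => exp (f x)) :=
  ⟨hf.1, fun _ hx _ hy _ _ ha hb hab =>
    (exp_le_exp.2 (hf.2 hx hy ha hb hab)).trans
      (convexOn_exp.2 (mem_univ _) (mem_univ _) ha hb hab)⟩

lemma isOrliczFunction_exp_rpow_sub_one {p : ℝ} (hp : 1 ≤ p) :
    IsOrliczFunction (fun x => exp (x ^ p) - 1) := by
  have hp₀ : 0 < p := by linarith
  refine ⟨by simp [zero_rpow hp₀.ne'], ?_, ?_, ?_, 1, by simp, by simp [sub_eq_zero]⟩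
  · exact ((convexOn_rpow hp).exp.add_const (-1)).congr fun x _ => by simp [sub_eq_add_neg]
  · intro x hx y _ hxy
    simpa using rpow_le_rpow hx hxy hp₀.le
  · intro x hx
    simpa using rpow_nonneg hx p

lemma monotoneOn_rpow_add_mul_log {p a : ℝ} (hp : 0 < p) (ha : 0 < a)
    (hap : (1 - p) / p ≤ a ^ p) :
    MonotoneOn (fun x => x ^ p + (p - 1) * log x) (Ici a) := by
  have hpos : ∀ x ∈ Ici a, 0 < x := fun x hx => ha.trans_le hx
  refine monotoneOn_of_hasDerivWithinAt_nonneg (f' := fun x => p * x ^ (p - 1) + (p - 1) * x⁻¹)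
    (convex_Ici a) ?_ (fun x hx => ?_) (fun x hx => ?_)
  · exact ContinuousOn.add (fun x hx => (continuousAt_rpow_const x p
      (Or.inl (hpos x hx).ne')).continuousWithinAt)
      (continuousOn_const.mul (continuousOn_log.mono fun x hx => (hpos x hx).ne'))
  · rw [interior_Ici] at hx
    have hx₀ : 0 < x := ha.trans hx
    exact ((hasDerivAt_rpow_const (Or.inl hx₀.ne')).add
      ((hasDerivAt_log hx₀.ne').const_mul (p - 1))).hasDerivWithinAt
  · rw [interior_Ici] at hx
    have hx₀ : 0 < x := ha.trans hx
    have hxp : 1 - p ≤ x ^ p * p :=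
      (div_le_iff₀ hp).1 (hap.trans (rpow_le_rpow ha.le hx.le hp.le))
    have hsplit : p * x ^ (p - 1) + (p - 1) * x⁻¹ = (p * x ^ p + (p - 1)) / x := by
      rw [rpow_sub_one hx₀.ne']
      field_simp
    rw [hsplit]
    exact div_nonneg (by linarith) hx₀.le

lemma convexOn_exp_rpow_Ici {p a : ℝ} (hp : 0 < p) (ha : 0 < a)
    (hap : (1 - p) / p ≤ a ^ p) :
    ConvexOn ℝ (Ici a) (fun x => exp (x ^ p)) := by
  have hpos : ∀ x ∈ Ici a, 0 < x := fun x hx => ha.trans_le hx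
  have hderiv : ∀ x ∈ Ioi a,
      HasDerivAt (fun x => exp (x ^ p)) (p * exp (x ^ p + (p - 1) * log x)) x := by
    intro x hx
    have hx₀ : 0 < x := ha.trans hx
    convert (hasDerivAt_rpow_const (p := p) (Or.inl hx₀.ne')).exp using 1
    rw [exp_add, mul_comm (p - 1), ← rpow_def_of_pos hx₀]
    ring
  refine MonotoneOn.convexOn_of_deriv (convex_Ici a) ?_ ?_ ?_
  · exact continuous_exp.comp_continuousOn fun x hx =>
      (continuousAt_rpow_const x p (Or.inl (hpos x hx).ne')).continuousWithinAt
  · rw [interior_Ici]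
    exact fun x hx => (hderiv x hx).differentiableAt.differentiableWithinAt
  · rw [interior_Ici]
    intro x hx y hy hxy
    rw [(hderiv x hx).deriv, (hderiv y hy).deriv]
    exact mul_le_mul_of_nonneg_left (exp_le_exp.2 <| monotoneOn_rpow_add_mul_log hp ha hap
      (mem_Ici_of_Ioi hx) (mem_Ici_of_Ioi hy) hxy) hp.le

lemma ConvexOn.comp_max_const {g : ℝ → ℝ} {a : ℝ} (hg : ConvexOn ℝ (Ici a) g)
    (hg' : MonotoneOn g (Ici a)) : ConvexOn ℝ univ (fun x => g (max x a)) := by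
  have himage : (fun x => max x a) '' univ = Ici a :=
    image_univ.trans <| Set.ext fun y =>
      ⟨by rintro ⟨x, rfl⟩; exact le_max_right x a, fun hy => ⟨y, max_eq_left hy⟩⟩
  exact ConvexOn.comp (f := fun x => max x a) (himage ▸ hg)
    ((convexOn_id convex_univ).sup (convexOn_const a convex_univ)) (himage ▸ hg')

def clippedExpRpow (p v x : ℝ) : ℝ := max (exp (x ^ p) - exp v) 0

lemma clippedExpRpow_le_exp_rpow_sub_one {p v x : ℝ} (hv : 0 ≤ v) (hx : 0 ≤ x) :
    clippedExpRpow p v x ≤ exp (x ^ p) - 1 :=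
  max_le (by linarith [one_le_exp hv]) (by linarith [one_le_exp (rpow_nonneg hx p)])

lemma isOrliczFunction_clippedExpRpow {p v : ℝ} (hp : 0 < p) (hv : 0 < v)
    (hvp : (1 - p) / p ≤ v) : IsOrliczFunction (clippedExpRpow p v) := by
  set a := v ^ p⁻¹
  have ha : 0 < a := rpow_pos_of_pos hv _
  have hav : a ^ p = v := rpow_inv_rpow hv.le hp.ne'
  have hmono : MonotoneOn (fun x => exp (x ^ p) - exp v) (Ici 0) := fun x hx y _ hxy => by
    simpa using rpow_le_rpow hx hxy hp.le
  have hclip : EqOn (clippedExpRpow p v) (fun x => exp ((max x a) ^ p) - exp v) (Ici 0) := by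
    intro x hx
    simp only [clippedExpRpow]
    rcases le_total x a with hxa | hxa
    · rw [max_eq_right hxa, hav, sub_self, max_eq_right]
      simpa [← hav] using rpow_le_rpow hx hxa hp.le
    · rw [max_eq_left hxa, max_eq_left]
      simpa [← hav] using rpow_le_rpow ha.le hxa hp.le
  refine ⟨?_, ?_, ?_, fun x _ => le_max_right _ _, a + 1, mem_Ici.2 (by positivity), ?_⟩
  · simp [clippedExpRpow, zero_rpow hp.ne', hv.le]
  · refine (ConvexOn.subset ?_ (subset_univ _) (convex_Ici 0)).congr hclip.symm
    refine ConvexOn.comp_max_const (g := fun x => exp (x ^ p) - exp v) ?_ ?_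
    · exact ((convexOn_exp_rpow_Ici hp ha (hav ▸ hvp)).add_const (-exp v)).congr fun x _ => by
        simp [sub_eq_add_neg]
    · exact hmono.mono fun x hx => ha.le.trans hx
  · exact fun x hx y hy hxy => max_le_max (hmono hx hy hxy) le_rfl
  · have hgrow : exp v < exp ((a + 1) ^ p) :=
      exp_lt_exp.2 (hav ▸ rpow_lt_rpow ha.le (lt_add_one a) hp)
    rw [clippedExpRpow, max_eq_left (by linarith), sub_ne_zero]
    exact hgrow.ne'

lemma exp_mul_le_add_mul_max_exp_sub {c u v : ℝ} (hc₀ : 0 ≤ c) (hc₁ : c ≤ 1) :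
    exp (c * u) ≤ exp (c * v) + c * exp ((c - 1) * v) * max (exp u - exp v) 0 := by
  rcases le_total u v with huv | hvu
  · have : exp (c * u) ≤ exp (c * v) := exp_le_exp.2 (mul_le_mul_of_nonneg_left huv hc₀)
    have : 0 ≤ c * exp ((c - 1) * v) * max (exp u - exp v) 0 := by positivity
    linarith
  · have hchord : exp (c * (u - v)) ≤ 1 - c + c * exp (u - v) := by
      simpa using convexOn_exp.2 (mem_univ 0) (mem_univ (u - v)) (sub_nonneg.2 hc₁) hc₀
        (sub_add_cancel 1 c)
    rw [max_eq_left (sub_nonneg.2 (exp_le_exp.2 hvu))]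
    calc exp (c * u) = exp (c * v) * exp (c * (u - v)) := by rw [← exp_add]; ring_nf
      _ ≤ exp (c * v) * (1 - c + c * exp (u - v)) := by gcongr
      _ = exp (c * v) + c * exp ((c - 1) * v) * (exp u - exp v) := by
        simp only [sub_mul, one_mul, exp_sub]
        field_simp
        ring

section NormComparison

variable {Ω : Type*} [MeasureSpace Ω] [IsProbabilityMeasure (ℙ : Measure Ω)]

lemma orliczNorm_le_psiNorm_of_le {ψ : ℝ → ℝ} {p : ℝ}
    (hψ : ∀ x, 0 ≤ x → ψ x ≤ exp (x ^ p) - 1) (X : Ω → ℝ) :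
    orliczNorm ψ X ≤ psiNorm p X := by
  refine sInf_le_sInf fun B ⟨b, hb, hB, hint⟩ => ⟨b, hb, hB, ?_⟩
  have hpt : ∀ ω, ENNReal.ofReal (ψ (|X ω| / b)) + 1 ≤
      ENNReal.ofReal (exp ((|X ω| / b) ^ p)) := fun ω => by
    have hx : 0 ≤ |X ω| / b := by positivity
    calc ENNReal.ofReal (ψ (|X ω| / b)) + 1
        ≤ ENNReal.ofReal (exp ((|X ω| / b) ^ p) - 1) + ENNReal.ofReal 1 := by
          rw [ENNReal.ofReal_one]
          gcongr
          exact hψ _ hx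
      _ = ENNReal.ofReal (exp ((|X ω| / b) ^ p)) := by
          rw [← ENNReal.ofReal_add (sub_nonneg.2 (one_le_exp (rpow_nonneg hx p))) zero_le_one,
            sub_add_cancel]
  have : (∫⁻ ω, ENNReal.ofReal (ψ (|X ω| / b))) + 1 ≤ 1 + 1 :=
    calc (∫⁻ ω, ENNReal.ofReal (ψ (|X ω| / b))) + 1
        = ∫⁻ ω, (ENNReal.ofReal (ψ (|X ω| / b)) + 1) := by
          rw [lintegral_add_right _ measurable_const, lintegral_const, measure_univ, mul_one]
      _ ≤ 1 + 1 := (lintegral_mono hpt).trans (hint.trans_eq one_add_one_eq_two.symm)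
  exact (ENNReal.add_le_add_iff_right ENNReal.one_ne_top).1 this

lemma psiNorm_le_mul_orliczNorm_of_le {ψ : ℝ → ℝ} {p C A K : ℝ} (hC : 0 < C) (hA : 0 ≤ A)
    (hK : 0 ≤ K) (hAK : A + K ≤ 2) (hψ : ∀ x, 0 ≤ x → exp ((x / C) ^ p) ≤ A + K * ψ x)
    (X : Ω → ℝ) : psiNorm p X ≤ ENNReal.ofReal C * orliczNorm ψ X := by
  rw [orliczNorm, sInf_eq_iInf', ENNReal.mul_iInf_of_ne (by simpa using hC) ENNReal.ofReal_ne_top]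
  refine le_iInf fun ⟨_, b, hb, rfl, hint⟩ =>
    sInf_le ⟨C * b, mul_pos hC hb, (ENNReal.ofReal_mul hC.le).symm, ?_⟩
  have hpt : ∀ ω, ENNReal.ofReal (exp ((|X ω| / (C * b)) ^ p)) ≤
      ENNReal.ofReal A + ENNReal.ofReal K * ENNReal.ofReal (ψ (|X ω| / b)) := fun ω => by
    rw [← ENNReal.ofReal_mul hK, mul_comm C, ← div_div]
    exact (ENNReal.ofReal_le_ofReal (hψ _ (by positivity))).trans ENNReal.ofReal_add_le
  calc ∫⁻ ω, ENNReal.ofReal (exp ((|X ω| / (C * b)) ^ p))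
      ≤ ∫⁻ ω, (ENNReal.ofReal A + ENNReal.ofReal K * ENNReal.ofReal (ψ (|X ω| / b))) :=
        lintegral_mono hpt
    _ = ENNReal.ofReal A + ENNReal.ofReal K * ∫⁻ ω, ENNReal.ofReal (ψ (|X ω| / b)) := by
        rw [lintegral_add_left measurable_const, lintegral_const_mul' _ _ ENNReal.ofReal_ne_top,
          lintegral_const, measure_univ, mul_one]
    _ ≤ ENNReal.ofReal A + ENNReal.ofReal K * 1 := by gcongr
    _ ≤ 2 := by
        rw [mul_one, ← ENNReal.ofReal_add hA hK, ← ENNReal.ofReal_ofNat]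
        exact ENNReal.ofReal_le_ofReal hAK

end NormComparison

lemma exp_le_one_add_add_sq {t : ℝ} (ht : |t| ≤ 1) : exp t ≤ 1 + t + t ^ 2 := by
  linarith [(abs_le.1 (abs_exp_sub_one_sub_id_le ht)).2]

lemma exp_log_two_mul_exp_neg_one_add_le_two :
    exp (log 2 * exp (-1)) + log 2 * exp ((log 2 - 1) * exp (-1)) ≤ 2 := by
  have hL₀ := log_two_gt_d9
  have hL₁ := log_two_lt_d9
  have hs₀ := exp_neg_one_gt_d9
  have hs₁ := exp_neg_one_lt_d9
  have ht₁ : 0 ≤ log 2 * exp (-1) ∧ log 2 * exp (-1) ≤ 0.26 :=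
    ⟨by positivity, by nlinarith⟩
  have ht₂ : -0.5 ≤ (log 2 - 1) * exp (-1) ∧ (log 2 - 1) * exp (-1) ≤ -0.11 :=
    ⟨by nlinarith, by nlinarith⟩
  have h₁ : exp (log 2 * exp (-1)) ≤ 1.33 :=
    (exp_le_one_add_add_sq (abs_le.2 ⟨by linarith, by linarith⟩)).trans (by nlinarith)
  have h₂ : exp ((log 2 - 1) * exp (-1)) ≤ 0.91 :=
    (exp_le_one_add_add_sq (abs_le.2 ⟨by linarith, by linarith⟩)).trans (by nlinarith)
  nlinarith [exp_pos ((log 2 - 1) * exp (-1))]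

lemma exp_mul_add_mul_exp_sub_one_mul_le_two {c v : ℝ} (hc : c ≤ log 2)
    (hcv : c * v = log 2 * exp (-1)) (hv : exp (-1) ≤ v) :
    exp (c * v) + c * exp ((c - 1) * v) ≤ 2 := by
  have hexp : exp ((c - 1) * v) ≤ exp ((log 2 - 1) * exp (-1)) :=
    exp_le_exp.2 (by linarith [sub_one_mul c v, sub_one_mul (log 2) (exp (-1))])
  rw [hcv]
  calc exp (log 2 * exp (-1)) + c * exp ((c - 1) * v)
      ≤ exp (log 2 * exp (-1)) + log 2 * exp ((log 2 - 1) * exp (-1)) := by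
        gcongr
    _ ≤ 2 := exp_log_two_mul_exp_neg_one_add_le_two

lemma exp_neg_one_mul_div_rpow_one_div_rpow {p L : ℝ} (hp : 0 < p) (hL : 0 < L) :
    (exp (-1) * (exp 1 / (p * L)) ^ ((1 : ℝ) / p)) ^ p = (L * (p * exp (p - 1)))⁻¹ := by
  rw [mul_rpow (exp_pos _).le (by positivity), one_div, rpow_inv_rpow (by positivity) hp.ne',
    ← exp_mul, neg_one_mul, sub_eq_add_neg, exp_add, exp_neg p, exp_neg 1]
  field_simp

lemma mul_exp_sub_one_le_one {p : ℝ} (hp : p ≤ 1) : p * exp (p - 1) ≤ 1 :=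
  mul_le_one₀ hp (exp_pos _).le (exp_le_one_iff.2 (by linarith))

lemma exp_neg_one_le_exp_neg_div_self {p : ℝ} (hp₀ : 0 < p) (hp₁ : p ≤ 1) :
    exp (-1) ≤ exp (-p) / p := by
  rw [le_div_iff₀ hp₀]
  nlinarith [exp_le_exp.2 (neg_le_neg hp₁), exp_pos (-1)]

/-- for `p ≥ 1` the function `x ↦ exp(x^p) − 1` is an Orlicz function, and
for `0 < p < 1` the `ψ_p` quasi-norm is equivalent to an Orlicz norm with constant
`C_{ψ_p} = e⁻¹ (e / (p log 2))^{1/p}`. -/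
theorem psi_p_quasinorm_equivalent_orlicz :
    (∀ p : ℝ, 1 ≤ p → IsOrliczFunction (fun x => Real.exp (x ^ p) - 1)) ∧
    (∀ p : ℝ, 0 < p → p < 1 →
      ∃ ψ : ℝ → ℝ, IsOrliczFunction ψ ∧
        ∀ (Ω : Type) [MeasureSpace Ω] [IsProbabilityMeasure (ℙ : Measure Ω)],
        ∀ X : Ω → ℝ, Measurable X →
          orliczNorm ψ X ≤ psiNorm p X ∧
          psiNorm p X ≤
            ENNReal.ofReal
                (Real.exp (-1) * (Real.exp 1 / (p * Real.log 2)) ^ ((1 : ℝ) / p)) *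
              orliczNorm ψ X) := by
  refine ⟨fun p hp => isOrliczFunction_exp_rpow_sub_one hp, fun p hp₀ hp₁ => ?_⟩
  set c := log 2 * (p * exp (p - 1))
  set v := exp (-p) / p
  have hc₀ : 0 ≤ c := by positivity
  have hc : c ≤ log 2 :=
    mul_le_of_le_one_right (log_pos one_lt_two).le (mul_exp_sub_one_le_one hp₁.le)
  have hcv : c * v = log 2 * exp (-1) := by
    simp only [c, v, mul_div_assoc', mul_assoc, ← exp_add]
    field_simp
    ring_nf
  have hvp : (1 - p) / p ≤ v :=
    div_le_div_of_nonneg_right (by linarith [add_one_le_exp (-p)]) hp₀.le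
  refine ⟨clippedExpRpow p v, isOrliczFunction_clippedExpRpow hp₀ (by positivity) hvp,
    fun Ω _ _ X _ => ⟨orliczNorm_le_psiNorm_of_le
      (fun x hx => clippedExpRpow_le_exp_rpow_sub_one (by positivity) hx) X,
      psiNorm_le_mul_orliczNorm_of_le (by positivity) (exp_pos _).le (by positivity)
        (exp_mul_add_mul_exp_sub_one_mul_le_two hc hcv
          (exp_neg_one_le_exp_neg_div_self hp₀ hp₁.le)) (fun x hx => ?_) X⟩⟩
  rw [div_rpow hx (by positivity), exp_neg_one_mul_div_rpow_one_div_rpow hp₀ (log_pos one_lt_two),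
    div_inv_eq_mul, mul_comm]
  exact exp_mul_le_add_mul_max_exp_sub hc₀ (hc.trans (log_two_lt_d9.le.trans (by norm_num)))
end
end

section
/- Let p > 0 and let X₁, X₂, … be real random variables on a common probability space with Σ_{j=1}^∞ ‖X_j‖_{ψ_p} < ∞. Then there exists a random variable L with ‖L‖_{ψ_p} < ∞ such that ‖Σ_{j=1}^N X_j − L‖_{ψ_p} → 0 as N → ∞, and ‖L‖_{ψ_p} ≤ C̃_p Σ_{j=1}^∞ ‖X_j‖_{ψ_p}, where C̃_p = 1 if p ≥ 1 and C̃_p = e^{−1}(e/(p log 2))^{1/p} if 0 < p < 1. Moreover, if X_j ≥ 0 almost surely for every j, then the partial sums Σ_{j=1}^N X_j also converge to L almost surely. -/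
/-!
On `t ≥ 0`, the function `t ↦ exp (t ^ p)` is convex exactly where
`t ^ p ≥ s := max ((1 - p) / p) 0`; freezing it below that point gives a convex, increasing
`Φ ≥ 0` with `Φ 0 = 0` and `Φ t + 1 ≤ exp (t ^ p)`, and Bernoulli's inequality gives
`exp (r t ^ p) ≤ exp (r s) + r Φ t` for `r = C̃_p ^ (-p) ≤ 1`. If `E exp ((|X_j| / b_j) ^ p) ≤ 2`,
then `E Φ (|X_j| / b_j) ≤ 1`, and Jensen's inequality for `Φ` with the weights `b_j / ∑ b_j`
bounds `E exp ((|∑ X_j| / (C̃_p ∑ b_j)) ^ p)` by `exp (r s) + r`, which is at most `2` for the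
chosen `C̃_p`. Fatou's lemma passes to infinite sums, which converge almost surely since a
`ψ_p`-bound controls the first moment; applied to the tails, the bound gives convergence in `ψ_p`.
-/

open MeasureTheory ProbabilityTheory Real Filter Topology
open scoped ENNReal NNReal

noncomputable section

lemma rpow_add_le_rpow_add_mul {A B r : ℝ} (hA : 1 ≤ A) (hB : 0 ≤ B) (hr0 : 0 ≤ r)
    (hr1 : r ≤ 1) : (A + B) ^ r ≤ A ^ r + r * B := by
  have hA0 : 0 < A := one_pos.trans_le hA
  have hAr : A ^ r ≤ A := by simpa using rpow_le_rpow_of_exponent_le hA hr1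
  have hbern : (1 + B / A) ^ r ≤ 1 + r * (B / A) :=
    rpow_one_add_le_one_add_mul_self (by linarith [div_nonneg hB hA0.le]) hr0 hr1
  calc (A + B) ^ r = A ^ r * (1 + B / A) ^ r := by
        rw [← mul_rpow hA0.le (by positivity), mul_add, mul_one, mul_div_cancel₀ _ hA0.ne']
    _ ≤ A ^ r * (1 + r * (B / A)) := mul_le_mul_of_nonneg_left hbern (rpow_nonneg hA0.le r)
    _ = A ^ r + r * B * (A ^ r / A) := by field_simp
    _ ≤ A ^ r + r * B := by
        linarith [mul_le_of_le_one_right (mul_nonneg hr0 hB) ((div_le_one hA0).2 hAr)]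

lemma self_le_exp_rpow_sub {p : ℝ} (hp : 0 < p) {v : ℝ} (hv : 0 ≤ v) :
    v ≤ exp (v ^ p - (1 + log p) / p) := by
  rcases hv.eq_or_lt with rfl | hv0
  · exact (exp_pos _).le
  have hvp : 0 < v ^ p := rpow_pos_of_pos hv0 p
  have h : log (p * v ^ p) ≤ p * v ^ p - 1 := log_le_sub_one_of_pos (mul_pos hp hvp)
  rw [log_mul hp.ne' hvp.ne', log_rpow hv0] at h
  have : log v ≤ v ^ p - (1 + log p) / p := by
    rw [le_sub_iff_add_le, add_div' _ _ _ hp.ne', div_le_iff₀ hp]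
    linarith
  simpa [exp_log hv0] using exp_le_exp.2 this

lemma ConvexOn.map_sum_le_of_sum_le_one {ι : Type*} {f : ℝ → ℝ} (hf : ConvexOn ℝ Set.univ f)
    (hf0 : f 0 ≤ 0) {s : Finset ι} {w v : ι → ℝ} (hw : ∀ i ∈ s, 0 ≤ w i)
    (hw1 : ∑ i ∈ s, w i ≤ 1) : f (∑ i ∈ s, w i * v i) ≤ ∑ i ∈ s, w i * f (v i) := by
  have := hf.map_add_sum_le (p := v) (q := 0) hw (by ring) (fun _ _ => trivial)
    (sub_nonneg.2 hw1) trivial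
  simp only [smul_eq_mul, mul_zero, zero_add] at this
  nlinarith [sub_nonneg.2 hw1]

def psiConst (p : ℝ) : ℝ :=
  if 1 ≤ p then 1 else exp (-1) * (exp 1 / (p * log 2)) ^ ((1 : ℝ) / p)

def psiScale (p : ℝ) : ℝ := (psiConst p ^ p)⁻¹

def inflectionLevel (p : ℝ) : ℝ := max ((1 - p) / p) 0

def inflectionPoint (p : ℝ) : ℝ := inflectionLevel p ^ p⁻¹

/-- A convex minorant of `exp (t ^ p) - 1`: `exp (u ^ p)` frozen below its inflection point and
shifted to vanish at `0`. -/
def convexPsi (p t : ℝ) : ℝ := exp (max t (inflectionPoint p) ^ p) - exp (inflectionLevel p)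

section Constants

variable {p : ℝ}

lemma inflectionLevel_nonneg : 0 ≤ inflectionLevel p := le_max_right _ _

lemma inflectionLevel_of_one_le (h : 1 ≤ p) : inflectionLevel p = 0 :=
  max_eq_right (div_nonpos_of_nonpos_of_nonneg (by linarith) (by linarith))

lemma inflectionLevel_of_lt_one (hp : 0 < p) (h : p < 1) : inflectionLevel p = (1 - p) / p :=
  max_eq_left (div_nonneg (by linarith) hp.le)

lemma inflectionPoint_nonneg : 0 ≤ inflectionPoint p := rpow_nonneg inflectionLevel_nonneg _

lemma inflectionPoint_rpow (hp : 0 < p) : inflectionPoint p ^ p = inflectionLevel p := by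
  rw [inflectionPoint, ← rpow_mul inflectionLevel_nonneg, inv_mul_cancel₀ hp.ne', rpow_one]

lemma psiConst_pos (hp : 0 < p) : 0 < psiConst p := by
  unfold psiConst
  split_ifs
  · exact one_pos
  · exact mul_pos (exp_pos _)
      (rpow_pos_of_pos (div_pos (exp_pos _) (mul_pos hp (log_pos one_lt_two))) _)

lemma psiScale_pos (hp : 0 < p) : 0 < psiScale p :=
  inv_pos.2 (rpow_pos_of_pos (psiConst_pos hp) _)

lemma psiScale_of_one_le (h : 1 ≤ p) : psiScale p = 1 := by
  rw [psiScale, psiConst, if_pos h, one_rpow, inv_one]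

lemma psiScale_of_lt_one (hp : 0 < p) (h : p < 1) : psiScale p = p * log 2 * exp (p - 1) := by
  have hc : 0 ≤ exp 1 / (p * log 2) :=
    div_nonneg (exp_pos _).le (mul_pos hp (log_pos one_lt_two)).le
  rw [psiScale, psiConst, if_neg h.not_ge, mul_rpow (exp_pos _).le (rpow_nonneg hc _),
    ← rpow_mul hc, one_div, inv_mul_cancel₀ hp.ne', rpow_one, ← exp_mul, exp_sub]
  field_simp
  rw [← exp_add, neg_add_cancel, exp_zero]

lemma div_psiConst_rpow (hp : 0 < p) {x : ℝ} (hx : 0 ≤ x) :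
    (x / psiConst p) ^ p = psiScale p * x ^ p := by
  rw [div_rpow hx (psiConst_pos hp).le, psiScale, div_eq_inv_mul]

lemma psiScale_le_one (hp : 0 < p) : psiScale p ≤ 1 := by
  rcases le_or_gt 1 p with h | h
  · rw [psiScale_of_one_le h]
  · rw [psiScale_of_lt_one hp h]
    have hlog : log 2 ≤ 1 := by linarith [log_le_sub_one_of_pos (zero_lt_two (α := ℝ))]
    have : exp (p - 1) ≤ 1 := exp_le_one_iff.2 (by linarith)
    have : p * log 2 ≤ 1 := by nlinarith [log_pos (one_lt_two (α := ℝ))]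
    nlinarith [exp_pos (p - 1), mul_pos hp (log_pos (one_lt_two (α := ℝ)))]

/-- For `p < 1` this is where the constant comes from: with `a = (1 - p) e^{p - 1} ∈ [0, 1]` the
left side is `2 ^ a + p e^{p - 1} log 2 ≤ 1 + e^{p - 1} (1 - p + p log 2) ≤ 2`. -/
lemma exp_inflectionLevel_mul_psiScale_add_psiScale_le_two (hp : 0 < p) :
    exp (inflectionLevel p * psiScale p) + psiScale p ≤ 2 := by
  rcases le_or_gt 1 p with h | h
  · rw [psiScale_of_one_le h, inflectionLevel_of_one_le h]
    norm_num
  rw [psiScale_of_lt_one hp h, inflectionLevel_of_lt_one hp h]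
  set a := (1 - p) * exp (p - 1)
  have he : exp (p - 1) ≤ 1 := exp_le_one_iff.2 (by linarith)
  have ha0 : 0 ≤ a := mul_nonneg (by linarith) (exp_pos _).le
  have ha1 : a ≤ 1 := mul_le_one₀ (by linarith) (exp_pos _).le he
  have hpow : exp (a * log 2) ≤ 1 + a := by
    have := rpow_one_add_le_one_add_mul_self (s := 1) (by norm_num) ha0 ha1
    rw [rpow_def_of_pos (by norm_num), one_add_one_eq_two, mul_comm] at this
    linarith
  have hlog : log 2 ≤ 1 := by linarith [log_le_sub_one_of_pos (zero_lt_two (α := ℝ))]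
  calc exp ((1 - p) / p * (p * log 2 * exp (p - 1))) + p * log 2 * exp (p - 1)
      = exp (a * log 2) + p * log 2 * exp (p - 1) := by
        congr 2
        field_simp
        ring
    _ ≤ 1 + exp (p - 1) * (1 - p + p * log 2) := by linarith
    _ ≤ 2 := by nlinarith [exp_pos (p - 1), log_pos (one_lt_two (α := ℝ))]

end Constants

section ConvexPsi

variable {p : ℝ}

/-- The second derivative of `exp (u ^ p)` is
`p u ^ (p - 2) exp (u ^ p) (p u ^ p + p - 1)`, nonnegative once `u ^ p ≥ (1 - p) / p`. -/
lemma convexOn_exp_rpow_Ici_s19 (hp : 0 < p) :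
    ConvexOn ℝ (Set.Ici (inflectionPoint p)) fun u => exp (u ^ p) := by
  have hpos : ∀ x ∈ interior (Set.Ici (inflectionPoint p)), 0 < x := fun x hx =>
    inflectionPoint_nonneg.trans_lt (by rwa [interior_Ici] at hx)
  refine convexOn_of_hasDerivWithinAt2_nonneg (convex_Ici _)
    (f' := fun u => exp (u ^ p) * (p * u ^ (p - 1)))
    (f'' := fun u => exp (u ^ p) * (p * u ^ (p - 1)) * (p * u ^ (p - 1))
      + exp (u ^ p) * (p * ((p - 1) * u ^ (p - 1 - 1))))
    ((continuous_rpow_const hp.le).rexp.continuousOn) (fun x hx => ?_) (fun x hx => ?_)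
    (fun x hx => ?_)
  · exact (hasDerivAt_rpow_const (Or.inl (hpos x hx).ne')).exp.hasDerivWithinAt
  · exact ((hasDerivAt_rpow_const (Or.inl (hpos x hx).ne')).exp.mul
      ((hasDerivAt_rpow_const (Or.inl (hpos x hx).ne')).const_mul p)).hasDerivWithinAt
  · have hx0 := hpos x hx
    have hlevel : 1 - p ≤ p * x ^ p := by
      have h1 : inflectionLevel p ≤ x ^ p := by
        rw [← inflectionPoint_rpow hp]
        exact rpow_le_rpow inflectionPoint_nonneg (interior_subset hx) hp.le
      rcases le_or_gt 1 p with h | h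
      · nlinarith [rpow_nonneg hx0.le p]
      · rw [inflectionLevel_of_lt_one hp h, div_le_iff₀ hp] at h1
        linarith
    have hsq : x ^ (p - 1) * x ^ (p - 1) = x ^ (p - 1 - 1) * x ^ p := by
      rw [← rpow_add hx0, ← rpow_add hx0]
      ring_nf
    have hfactored : 0 ≤ exp (x ^ p) * p * x ^ (p - 1 - 1) * (p * x ^ p + (p - 1)) := by
      have := rpow_pos_of_pos hx0 (p - 1 - 1)
      have := exp_pos (x ^ p)
      have : 0 ≤ p * x ^ p + (p - 1) := by linarith
      positivity
    linear_combination hfactored - exp (x ^ p) * p * p * hsq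

lemma convexPsi_nonneg (hp : 0 < p) (t : ℝ) : 0 ≤ convexPsi p t := by
  rw [convexPsi, sub_nonneg, exp_le_exp, ← inflectionPoint_rpow hp]
  exact rpow_le_rpow inflectionPoint_nonneg (le_max_right _ _) hp.le

lemma convexPsi_zero (hp : 0 < p) : convexPsi p 0 = 0 := by
  rw [convexPsi, max_eq_right inflectionPoint_nonneg, inflectionPoint_rpow hp, sub_self]

lemma monotone_convexPsi (hp : 0 < p) : Monotone (convexPsi p) := fun _ _ hxy =>
  sub_le_sub_right (exp_le_exp.2 (rpow_le_rpow (inflectionPoint_nonneg.trans (le_max_right _ _))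
    (max_le_max hxy le_rfl) hp.le)) _

lemma continuous_convexPsi (hp : 0 < p) : Continuous (convexPsi p) :=
  ((continuous_rpow_const hp.le).comp (continuous_id.max continuous_const)).rexp.sub
    continuous_const

lemma convexOn_convexPsi (hp : 0 < p) : ConvexOn ℝ Set.univ (convexPsi p) := by
  have himage :
      (fun t : ℝ => max t (inflectionPoint p)) '' Set.univ = Set.Ici (inflectionPoint p) :=
    Set.ext fun y => ⟨by rintro ⟨x, -, rfl⟩; exact le_max_right x (inflectionPoint p),
      fun hy => ⟨y, trivial, max_eq_left hy⟩⟩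
  have hmax : ConvexOn ℝ Set.univ fun t : ℝ => max t (inflectionPoint p) :=
    (convexOn_id convex_univ).sup (convexOn_const (inflectionPoint p) convex_univ)
  have hmono : MonotoneOn (fun u => exp (u ^ p)) (Set.Ici (inflectionPoint p)) :=
    fun _ hx _ _ hxy => exp_le_exp.2 (rpow_le_rpow (inflectionPoint_nonneg.trans hx) hxy hp.le)
  rw [← himage] at hmono
  have hcomp := ((himage ▸ convexOn_exp_rpow_Ici_s19 hp).comp hmax hmono).add_const
    (-exp (inflectionLevel p))
  have hpsi : convexPsi p = ((fun u => exp (u ^ p)) ∘ fun t => max t (inflectionPoint p)) +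
      fun _ => -exp (inflectionLevel p) := by
    ext t
    simp [convexPsi, sub_eq_add_neg]
  rwa [hpsi]

lemma convexPsi_add_one_le (hp : 0 < p) {t : ℝ} (ht : 0 ≤ t) :
    convexPsi p t + 1 ≤ exp (t ^ p) := by
  rcases le_total t (inflectionPoint p) with h | h
  · rw [convexPsi, max_eq_right h, inflectionPoint_rpow hp, sub_self, zero_add]
    exact one_le_exp (rpow_nonneg ht p)
  · rw [convexPsi, max_eq_left h]
    linarith [one_le_exp (inflectionLevel_nonneg (p := p))]

/-- Above the inflection point, `exp (r t ^ p) = (exp s + convexPsi p t) ^ r` with `r ≤ 1`. -/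
lemma exp_psiScale_mul_rpow_le (hp : 0 < p) {t : ℝ} (ht : 0 ≤ t) :
    exp (psiScale p * t ^ p) ≤
      exp (inflectionLevel p * psiScale p) + psiScale p * convexPsi p t := by
  have hr0 := psiScale_pos hp
  rcases le_total t (inflectionPoint p) with h | h
  · have : t ^ p ≤ inflectionLevel p := by
      rw [← inflectionPoint_rpow hp]
      exact rpow_le_rpow ht h hp.le
    have := mul_nonneg hr0.le (convexPsi_nonneg hp t)
    have : exp (psiScale p * t ^ p) ≤ exp (inflectionLevel p * psiScale p) :=
      exp_le_exp.2 (by nlinarith)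
    linarith
  · have hsplit : exp (t ^ p) = exp (inflectionLevel p) + convexPsi p t := by
      rw [convexPsi, max_eq_left h]
      ring
    rw [mul_comm (psiScale p), exp_mul, exp_mul, hsplit]
    exact rpow_add_le_rpow_add_mul (one_le_exp inflectionLevel_nonneg)
      (convexPsi_nonneg hp t) hr0.le (psiScale_le_one hp)

lemma exp_abs_sum_div_psiConst_mul_rpow_le (hp : 0 < p) {ι : Type*} {s : Finset ι}
    {y b : ι → ℝ} (hb : ∀ i ∈ s, 0 < b i) {B : ℝ} (hB : 0 < B) (hbB : ∑ i ∈ s, b i ≤ B) :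
    exp ((|∑ i ∈ s, y i| / (psiConst p * B)) ^ p) ≤ exp (inflectionLevel p * psiScale p) +
      ∑ i ∈ s, psiScale p * (b i / B) * convexPsi p (|y i| / b i) := by
  have hθ : ∀ i ∈ s, 0 ≤ b i / B := fun i hi => div_nonneg (hb i hi).le hB.le
  have hθ1 : ∑ i ∈ s, b i / B ≤ 1 := by rwa [← Finset.sum_div, div_le_one hB]
  have hw0 : 0 ≤ |∑ i ∈ s, y i| / B := div_nonneg (abs_nonneg _) hB.le
  have hw : |∑ i ∈ s, y i| / B ≤ ∑ i ∈ s, b i / B * (|y i| / b i) := by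
    rw [Finset.sum_congr rfl fun i hi => show b i / B * (|y i| / b i) = |y i| / B by
      field_simp [(hb i hi).ne'], ← Finset.sum_div]
    exact div_le_div_of_nonneg_right (Finset.abs_sum_le_sum_abs _ _) hB.le
  have hjensen : convexPsi p (|∑ i ∈ s, y i| / B) ≤
      ∑ i ∈ s, b i / B * convexPsi p (|y i| / b i) :=
    (monotone_convexPsi hp hw).trans ((convexOn_convexPsi hp).map_sum_le_of_sum_le_one
      (convexPsi_zero hp).le hθ hθ1)
  rw [mul_comm, ← div_div, div_psiConst_rpow hp hw0]
  simp_rw [mul_assoc, ← Finset.mul_sum]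
  nlinarith [exp_psiScale_mul_rpow_le hp hw0, psiScale_pos hp]

end ConvexPsi

section PsiAdmissible

variable {Ω : Type*} [MeasureSpace Ω] {p : ℝ}

def PsiAdmissible (p : ℝ) (X : Ω → ℝ) (b : ℝ) : Prop :=
  0 < b ∧ ∫⁻ ω, ENNReal.ofReal (exp ((|X ω| / b) ^ p)) ∂(ℙ : Measure Ω) ≤ 2

lemma psiNorm_le_ofReal {X : Ω → ℝ} {b : ℝ} (h : PsiAdmissible p X b) :
    psiNorm p X ≤ ENNReal.ofReal b :=
  sInf_le ⟨b, h.1, rfl, h.2⟩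

lemma exists_psiAdmissible_lt {X : Ω → ℝ} {c : ℝ≥0∞} (h : psiNorm p X < c) :
    ∃ b, PsiAdmissible p X b ∧ ENNReal.ofReal b < c := by
  obtain ⟨_, ⟨b, hb, rfl, hint⟩, hlt⟩ := sInf_lt_iff.1 h
  exact ⟨b, ⟨hb, hint⟩, hlt⟩

lemma psiNorm_neg (X : Ω → ℝ) : psiNorm p (fun ω => -X ω) = psiNorm p X := by
  simp only [psiNorm, abs_neg]

lemma PsiAdmissible.lintegral_convexPsi_le_one [IsProbabilityMeasure (ℙ : Measure Ω)]
    (hp : 0 < p) {X : Ω → ℝ} {b : ℝ} (h : PsiAdmissible p X b) :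
    ∫⁻ ω, ENNReal.ofReal (convexPsi p (|X ω| / b)) ∂(ℙ : Measure Ω) ≤ 1 := by
  have hpt : ∀ ω, ENNReal.ofReal (convexPsi p (|X ω| / b)) + 1 ≤
      ENNReal.ofReal (exp ((|X ω| / b) ^ p)) := fun ω => by
    rw [← ENNReal.ofReal_one, ← ENNReal.ofReal_add (convexPsi_nonneg hp _) zero_le_one]
    exact ENNReal.ofReal_le_ofReal (convexPsi_add_one_le hp (div_nonneg (abs_nonneg _) h.1.le))
  have := (lintegral_mono hpt).trans h.2
  rwa [lintegral_add_right _ measurable_const, lintegral_const, measure_univ, mul_one,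
    ← one_add_one_eq_two, ENNReal.add_le_add_iff_right ENNReal.one_ne_top] at this

lemma PsiAdmissible.eLpNorm_one_le (hp : 0 < p) {X : Ω → ℝ} {b : ℝ}
    (h : PsiAdmissible p X b) :
    eLpNorm X 1 ℙ ≤ ENNReal.ofReal (b / exp ((1 + log p) / p)) * 2 := by
  have hpt : ∀ ω, ‖X ω‖ₑ ≤ ENNReal.ofReal (b / exp ((1 + log p) / p)) *
      ENNReal.ofReal (exp ((|X ω| / b) ^ p)) := fun ω => by
    rw [Real.enorm_eq_ofReal_abs, ← ENNReal.ofReal_mul (div_nonneg h.1.le (exp_pos _).le)]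
    refine ENNReal.ofReal_le_ofReal ?_
    calc |X ω| = b * (|X ω| / b) := (mul_div_cancel₀ _ h.1.ne').symm
      _ ≤ b * exp ((|X ω| / b) ^ p - (1 + log p) / p) :=
        mul_le_mul_of_nonneg_left (self_le_exp_rpow_sub hp (div_nonneg (abs_nonneg _) h.1.le))
          h.1.le
      _ = b / exp ((1 + log p) / p) * exp ((|X ω| / b) ^ p) := by rw [exp_sub]; ring
  rw [eLpNorm_one_eq_lintegral_enorm]
  calc ∫⁻ ω, ‖X ω‖ₑ ∂ℙ ≤ _ := lintegral_mono hpt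
    _ = _ := lintegral_const_mul' _ _ ENNReal.ofReal_ne_top
    _ ≤ _ := by gcongr; exact h.2

lemma PsiAdmissible.finset_sum [IsProbabilityMeasure (ℙ : Measure Ω)] (hp : 0 < p)
    {ι : Type*} {s : Finset ι} {Y : ι → Ω → ℝ} (hY : ∀ i ∈ s, Measurable (Y i)) {b : ι → ℝ}
    (hb : ∀ i ∈ s, PsiAdmissible p (Y i) (b i)) {B : ℝ} (hB : 0 < B)
    (hbB : ∑ i ∈ s, b i ≤ B) :
    PsiAdmissible p (fun ω => ∑ i ∈ s, Y i ω) (psiConst p * B) := by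
  refine ⟨mul_pos (psiConst_pos hp) hB, ?_⟩
  set c := exp (inflectionLevel p * psiScale p)
  set θ : ι → ℝ := fun i => psiScale p * (b i / B)
  set g : ι → Ω → ℝ≥0∞ := fun i ω => ENNReal.ofReal (convexPsi p (|Y i ω| / b i))
  have hθ : ∀ i ∈ s, 0 ≤ θ i := fun i hi =>
    mul_nonneg (psiScale_pos hp).le (div_nonneg (hb i hi).1.le hB.le)
  have hpt : ∀ ω, ENNReal.ofReal (exp ((|∑ i ∈ s, Y i ω| / (psiConst p * B)) ^ p)) ≤
      ENNReal.ofReal c + ∑ i ∈ s, ENNReal.ofReal (θ i) * g i ω := fun ω => by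
    have hnonneg : ∀ i ∈ s, 0 ≤ θ i * convexPsi p (|Y i ω| / b i) := fun i hi =>
      mul_nonneg (hθ i hi) (convexPsi_nonneg hp _)
    refine (ENNReal.ofReal_le_ofReal (exp_abs_sum_div_psiConst_mul_rpow_le hp
      (fun i hi => (hb i hi).1) hB hbB)).trans_eq ?_
    rw [ENNReal.ofReal_add (exp_pos _).le (Finset.sum_nonneg hnonneg),
      ENNReal.ofReal_sum_of_nonneg hnonneg]
    exact congrArg _ (Finset.sum_congr rfl fun i hi => ENNReal.ofReal_mul (hθ i hi))
  have hg : ∀ i ∈ s, AEMeasurable (fun ω => ENNReal.ofReal (θ i) * g i ω) ℙ := fun i hi =>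
    (((continuous_convexPsi hp).measurable.comp
      ((hY i hi).abs.div_const _)).ennreal_ofReal.const_mul _).aemeasurable
  calc ∫⁻ ω, ENNReal.ofReal (exp ((|∑ i ∈ s, Y i ω| / (psiConst p * B)) ^ p)) ∂ℙ
      ≤ ∫⁻ ω, ENNReal.ofReal c + ∑ i ∈ s, ENNReal.ofReal (θ i) * g i ω ∂ℙ :=
        lintegral_mono hpt
    _ = ENNReal.ofReal c + ∑ i ∈ s, ENNReal.ofReal (θ i) * ∫⁻ ω, g i ω ∂ℙ := by
        rw [lintegral_add_left measurable_const, lintegral_const, measure_univ, mul_one,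
          lintegral_finsetSum' _ hg]
        exact congrArg _ (Finset.sum_congr rfl fun i _ =>
          lintegral_const_mul' _ _ ENNReal.ofReal_ne_top)
    _ ≤ ENNReal.ofReal c + ∑ i ∈ s, ENNReal.ofReal (θ i) := by
        gcongr with i hi
        exact mul_le_of_le_one_right' ((hb i hi).lintegral_convexPsi_le_one hp)
    _ = ENNReal.ofReal (c + psiScale p * ∑ i ∈ s, b i / B) := by
        rw [Finset.mul_sum, ENNReal.ofReal_add (exp_pos _).le (Finset.sum_nonneg hθ),
          ENNReal.ofReal_sum_of_nonneg hθ]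
    _ ≤ ENNReal.ofReal 2 := ENNReal.ofReal_le_ofReal <| by
        have : ∑ i ∈ s, b i / B ≤ 1 := by rwa [← Finset.sum_div, div_le_one hB]
        nlinarith [exp_inflectionLevel_mul_psiScale_add_psiScale_le_two hp, psiScale_pos hp]
    _ = 2 := ENNReal.ofReal_ofNat 2

lemma PsiAdmissible.of_tendsto (hp : 0 < p) {F : ℕ → Ω → ℝ} (hF : ∀ n, Measurable (F n))
    {G : Ω → ℝ} (hFG : ∀ᵐ ω ∂(ℙ : Measure Ω), Tendsto (fun n => F n ω) atTop (𝓝 (G ω)))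
    {b : ℝ} (hb : ∀ n, PsiAdmissible p (F n) b) : PsiAdmissible p G b := by
  have hcont : Continuous fun x : ℝ => ENNReal.ofReal (exp ((|x| / b) ^ p)) :=
    ENNReal.continuous_ofReal.comp ((continuous_rpow_const hp.le).comp
      (continuous_abs.div_const b)).rexp
  refine ⟨(hb 0).1, ?_⟩
  calc ∫⁻ ω, ENNReal.ofReal (exp ((|G ω| / b) ^ p)) ∂ℙ
      = ∫⁻ ω, liminf (fun n => ENNReal.ofReal (exp ((|F n ω| / b) ^ p))) atTop ∂ℙ :=
        lintegral_congr_ae (hFG.mono fun ω h => ((hcont.tendsto _).comp h).liminf_eq.symm)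
    _ ≤ liminf (fun n => ∫⁻ ω, ENNReal.ofReal (exp ((|F n ω| / b) ^ p)) ∂ℙ) atTop :=
        lintegral_liminf_le fun n => hcont.measurable.comp (hF n)
    _ ≤ 2 := liminf_le_of_frequently_le (Frequently.of_forall fun n => (hb n).2)

lemma PsiAdmissible.of_hasSum [IsProbabilityMeasure (ℙ : Measure Ω)] (hp : 0 < p)
    {Y : ℕ → Ω → ℝ} (hY : ∀ j, Measurable (Y j)) {b : ℕ → ℝ}
    (hb : ∀ j, PsiAdmissible p (Y j) (b j)) (hbs : Summable b) {M : Ω → ℝ}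
    (hM : ∀ᵐ ω ∂(ℙ : Measure Ω), HasSum (fun j => Y j ω) (M ω)) :
    PsiAdmissible p M (psiConst p * ∑' j, b j) :=
  .of_tendsto hp (fun _ => Finset.measurable_sum _ fun j _ => hY j)
    (hM.mono fun _ h => h.tendsto_sum_nat) fun _ =>
      .finset_sum hp (fun j _ => hY j) (fun j _ => hb j)
        (hbs.tsum_pos (fun j => (hb j).1.le) 0 (hb 0).1)
        (hbs.sum_le_tsum _ fun j _ => (hb j).1.le)

lemma exists_psiAdmissible_tsum_lt {Y : ℕ → Ω → ℝ} {c : ℝ≥0∞}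
    (h : ∑' j, psiNorm p (Y j) < c) :
    ∃ b : ℕ → ℝ, (∀ j, PsiAdmissible p (Y j) (b j)) ∧ Summable b ∧
      ENNReal.ofReal (∑' j, b j) < c := by
  set S := ∑' j, psiNorm p (Y j)
  have hS : S ≠ ⊤ := h.ne_top
  obtain ⟨ε, hε0, hε⟩ := ENNReal.exists_pos_sum_of_countable' (tsub_pos_of_lt h).ne' ℕ
  choose b hb hlt using fun j => exists_psiAdmissible_lt
    (ENNReal.lt_add_right (ne_top_of_le_ne_top hS (ENNReal.le_tsum j)) (hε0 j).ne')
  have hsum : ∑' j, ENNReal.ofReal (b j) < c := calc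
    _ ≤ ∑' j, (psiNorm p (Y j) + ε j) := ENNReal.tsum_le_tsum fun j => (hlt j).le
    _ = S + ∑' j, ε j := ENNReal.tsum_add
    _ < S + (c - S) := ENNReal.add_lt_add_left hS hε
    _ = c := add_tsub_cancel_of_le h.le
  have hbs : Summable b := by
    simpa [ENNReal.toReal_ofReal (hb _).1.le] using ENNReal.summable_toReal hsum.ne_top
  exact ⟨b, hb, hbs, by rwa [ENNReal.ofReal_tsum_of_nonneg (fun j => (hb j).1.le) hbs]⟩

lemma psiNorm_le_of_hasSum [IsProbabilityMeasure (ℙ : Measure Ω)] (hp : 0 < p)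
    {Y : ℕ → Ω → ℝ} (hY : ∀ j, Measurable (Y j)) {M : Ω → ℝ}
    (hM : ∀ᵐ ω ∂(ℙ : Measure Ω), HasSum (fun j => Y j ω) (M ω)) :
    psiNorm p M ≤ ENNReal.ofReal (psiConst p) * ∑' j, psiNorm p (Y j) := by
  have hK : ENNReal.ofReal (psiConst p) ≠ 0 := by simpa using psiConst_pos hp
  rw [mul_comm, ← ENNReal.div_le_iff hK ENNReal.ofReal_ne_top]
  refine le_of_forall_gt_imp_ge_of_dense fun c hc => ?_
  obtain ⟨b, hb, hbs, hlt⟩ := exists_psiAdmissible_tsum_lt hc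
  rw [ENNReal.div_le_iff hK ENNReal.ofReal_ne_top]
  calc psiNorm p M ≤ ENNReal.ofReal (psiConst p * ∑' j, b j) :=
        psiNorm_le_ofReal (.of_hasSum hp hY hb hbs hM)
    _ = ENNReal.ofReal (∑' j, b j) * ENNReal.ofReal (psiConst p) := by
        rw [ENNReal.ofReal_mul (psiConst_pos hp).le, mul_comm]
    _ ≤ c * ENNReal.ofReal (psiConst p) := by gcongr

lemma ae_summable_of_tsum_psiNorm_ne_top (hp : 0 < p) {Y : ℕ → Ω → ℝ}
    (hY : ∀ j, Measurable (Y j)) (h : ∑' j, psiNorm p (Y j) ≠ ⊤) :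
    ∀ᵐ ω ∂(ℙ : Measure Ω), Summable fun j => Y j ω := by
  obtain ⟨b, hb, hbs, -⟩ := exists_psiAdmissible_tsum_lt h.lt_top
  have hL1 : ∑' j, eLpNorm (Y j) 1 ℙ ≠ ⊤ := by
    refine ne_top_of_le_ne_top ?_ (ENNReal.tsum_le_tsum fun j => (hb j).eLpNorm_one_le hp)
    rw [ENNReal.tsum_mul_right, ← ENNReal.ofReal_tsum_of_nonneg
      (fun j => div_nonneg (hb j).1.le (exp_pos _).le) (hbs.div_const _)]
    exact ENNReal.mul_ne_top ENNReal.ofReal_ne_top ENNReal.ofNat_ne_top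
  filter_upwards [summable_norm_of_tsum_eLpNorm_ne_top le_rfl
    (fun j => (hY j).aestronglyMeasurable) hL1] with ω hω
  exact hω.of_norm

end PsiAdmissible

/-- `ψ_p`-triangle inequality for infinite sums, up to a constant. -/
theorem psi_p_triangle_inequality_infinite_sums
    (p : ℝ) (hp : 0 < p)
    (Ω : Type*) [MeasureSpace Ω] [IsProbabilityMeasure (ℙ : Measure Ω)]
    (X : ℕ → Ω → ℝ) (hmeas : ∀ j, Measurable (X j))
    (hsum : ∑' j, psiNorm p (X j) < ⊤) :
    ∃ L : Ω → ℝ, psiNorm p L < ⊤ ∧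
      Tendsto (fun N => psiNorm p (fun ω => (∑ j ∈ Finset.range N, X j ω) - L ω))
        atTop (𝓝 0) ∧
      psiNorm p L ≤
        ENNReal.ofReal
            (if 1 ≤ p then 1
             else Real.exp (-1) * (Real.exp 1 / (p * Real.log 2)) ^ ((1 : ℝ) / p)) *
          ∑' j, psiNorm p (X j) ∧
      ((∀ j, ∀ᵐ ω ∂(ℙ : Measure Ω), 0 ≤ X j ω) →
        ∀ᵐ ω ∂(ℙ : Measure Ω),
          Tendsto (fun N => ∑ j ∈ Finset.range N, X j ω) atTop (𝓝 (L ω))) := by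
  set L : Ω → ℝ := fun ω => ∑' j, X j ω
  have hL : ∀ᵐ ω ∂(ℙ : Measure Ω), HasSum (fun j => X j ω) (L ω) :=
    (ae_summable_of_tsum_psiNorm_ne_top hp hmeas hsum.ne).mono fun _ h => h.hasSum
  have hLle : psiNorm p L ≤ ENNReal.ofReal (psiConst p) * ∑' j, psiNorm p (X j) :=
    psiNorm_le_of_hasSum hp hmeas hL
  have htail : ∀ N, psiNorm p (fun ω => (∑ j ∈ Finset.range N, X j ω) - L ω) ≤
      ENNReal.ofReal (psiConst p) * ∑' j, psiNorm p (X (j + N)) := fun N => by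
    simpa only [psiNorm_neg] using psiNorm_le_of_hasSum hp (Y := fun j ω => -X (j + N) ω)
      (fun j => (hmeas (j + N)).neg)
      (hL.mono fun _ h => by simpa only [neg_sub] using ((hasSum_nat_add_iff' N).2 h).neg)
  have htail0 : Tendsto (fun N => ENNReal.ofReal (psiConst p) * ∑' j, psiNorm p (X (j + N)))
      atTop (𝓝 0) := by
    simpa using ENNReal.Tendsto.const_mul (ENNReal.tendsto_sum_nat_add _ hsum.ne)
      (Or.inr ENNReal.ofReal_ne_top)
  exact ⟨L, hLle.trans_lt (ENNReal.mul_lt_top ENNReal.ofReal_lt_top hsum),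
    tendsto_of_tendsto_of_tendsto_of_le_of_le tendsto_const_nhds htail0 (fun _ => zero_le) htail,
    hLle, fun _ => hL.mono fun _ h => h.tendsto_sum_nat⟩
end
end
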